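/- arXiv:1804.00740 — 5 statements merged into one kernel-verified Lean document; each statement's English description precedes it below -/
import Mathlib

section
/- Let δ > 0 and let {σₙ} be a sequence of cyclic quadrilaterals in Σ such that the Euclidean diameter of the point set {σₙ,₀, σₙ,₁, σₙ,₂, σₙ,₃} is greater than δ for all n, and such that Λ(σₙ) → 0 as n → ∞. Then |α₀(σₙ)| → 0 and |α₂(σₙ)| → 0, and there is a constant c > 0 such that |α₁(σₙ)| ≥ c and |α₃(σₙ)| ≥ c for all sufficiently large n. -/
open Set Filter

noncomputable section

abbrev S1 : Type := ↥(Metric.sphere (0 : ℂ) 1)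

def expMap (t : ℝ) : S1 :=
  ⟨Complex.exp (t * Complex.I), by
    simp [Metric.mem_sphere, Complex.dist_eq, Complex.norm_exp_ofReal_mul_I]⟩

def CCW4 (s : Fin 4 → S1) : Prop :=
  ∃ θ : Fin 4 → ℝ,
    (∀ k, (s k : ℂ) = Complex.exp (θ k * Complex.I)) ∧
    θ 0 < θ 1 ∧ θ 1 < θ 2 ∧ θ 2 < θ 3 ∧ θ 3 < θ 0 + 2 * Real.pi

def CCW3 (s : Fin 3 → S1) : Prop :=
  ∃ θ : Fin 3 → ℝ,
    (∀ k, (s k : ℂ) = Complex.exp (θ k * Complex.I)) ∧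
    θ 0 < θ 1 ∧ θ 1 < θ 2 ∧ θ 2 < θ 0 + 2 * Real.pi

def IsLabeledRect (R : Fin 4 → ℂ) : Prop :=
  R 1 ≠ R 0 ∧ ∃ r : ℝ, 0 < r ∧
    R 2 - R 1 = Complex.I * r * (R 1 - R 0) ∧ R 3 = R 0 + (R 2 - R 1)

def aspect (R : Fin 4 → ℂ) : ℝ := ‖R 2 - R 1‖ / ‖R 1 - R 0‖
def rectArea (R : Fin 4 → ℂ) : ℝ := ‖R 1 - R 0‖ * ‖R 2 - R 1‖
def rectDiam (R : Fin 4 → ℂ) : ℝ := ‖R 2 - R 0‖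

def inscribed (γ : Set ℂ) : Set (Fin 4 → ℂ) := {R | IsLabeledRect R ∧ ∀ k, R k ∈ γ}

def Graceful (φ : S1 → ℂ) (R : Fin 4 → ℂ) : Prop :=
  ∃ s : Fin 4 → S1, CCW4 s ∧ ∀ k, φ (s k) = R k

def gracefulRects (φ : S1 → ℂ) : Set (Fin 4 → ℂ) :=
  {R | R ∈ inscribed (Set.range φ) ∧ Graceful φ R}

def vertexSet (S : Set (Fin 4 → ℂ)) : Set ℂ := {p | ∃ R ∈ S, ∃ k, R k = p}
def aspectSet (S : Set (Fin 4 → ℂ)) : Set ℝ := aspect '' S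

def relabel (R : Fin 4 → ℂ) : Fin 4 → ℂ := fun k => R (k + 1)

def WindsOnce (φ : S1 → ℂ) (p : ℂ) : Prop :=
  ∃ a : ℝ → ℝ, Continuous a ∧ a (2 * Real.pi) = a 0 + 2 * Real.pi ∧
    ∀ t : ℝ, φ (expMap t) - p =
      (‖φ (expMap t) - p‖ : ℂ) * Complex.exp (a t * Complex.I)

def IsCCWJordan (φ : S1 → ℂ) : Prop :=
  Continuous φ ∧ Function.Injective φ ∧
  ∀ p : ℂ, p ∉ Set.range φ →
    Bornology.IsBounded (connectedComponentIn (Set.range φ)ᶜ p) →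
    WindsOnce φ p

def IsPolygon (γ : Set ℂ) : Prop :=
  ∃ (n : ℕ) (a b : Fin n → ℂ), γ = ⋃ i, segment ℝ (a i) (b i)

def ccwArc (x y : ℂ) : ℝ :=
  if 0 ≤ Complex.arg (y / x) then Complex.arg (y / x)
  else Complex.arg (y / x) + 2 * Real.pi

def Lam (σ : Fin 4 → S1) : ℝ :=
  (ccwArc (σ 0 : ℂ) (σ 1 : ℂ) + ccwArc (σ 2 : ℂ) (σ 3 : ℂ)) /
  (ccwArc (σ 1 : ℂ) (σ 2 : ℂ) + ccwArc (σ 3 : ℂ) (σ 0 : ℂ))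

def ccwArcSet (x y : S1) : Set S1 :=
  {z | ccwArc (x : ℂ) (z : ℂ) ≤ ccwArc (x : ℂ) (y : ℂ)}

def signedArea (p q r : ℂ) : ℝ :=
  ((q - p).re * (r - p).im - (q - p).im * (r - p).re) / 2

def NonzeroWinding (f : ℝ → S1) : Prop :=
  ∃ a : ℝ → ℝ, ContinuousOn a (Set.Icc 0 1) ∧
    (∀ t ∈ Set.Icc (0:ℝ) 1, (f t : ℂ) = Complex.exp (a t * Complex.I)) ∧
    ∃ m : ℤ, m ≠ 0 ∧ a 1 - a 0 = 2 * Real.pi * m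

def SimpleQuad (P : Fin 4 → ℂ) : Prop :=
  Function.Injective P ∧
  (∀ k : Fin 4, segment ℝ (P k) (P (k + 1)) ∩ segment ℝ (P (k + 1)) (P (k + 2)) = {P (k + 1)}) ∧
  (∀ k : Fin 4, segment ℝ (P k) (P (k + 1)) ∩ segment ℝ (P (k + 2)) (P (k + 3)) = ∅)

def shoelace (P : Fin 4 → ℂ) : ℝ :=
  (∑ k : Fin 4, ((P k).re * (P (k + 1)).im - (P (k + 1)).re * (P k).im)) / 2

def DegenChord (ζ : Fin 4 → ℂ) : Prop :=
  ∃ z w : ℂ, z ≠ w ∧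
    (ζ = ![z, z, w, w] ∨ ζ = ![w, z, z, w] ∨ ζ = ![w, w, z, z] ∨ ζ = ![z, w, w, z])

open Real Complex in
lemma abs_toIocMod_le_pr (t : ℝ) : |toIocMod Real.two_pi_pos (-π) t| ≤ |t| := by
  have mem := toIocMod_mem_Ioc Real.two_pi_pos (-π) t
  have hb : |toIocMod Real.two_pi_pos (-π) t| ≤ π := by
    rw [abs_le]; exact ⟨mem.1.le, by linarith [mem.2]⟩
  rcases le_or_gt π |t| with h | h
  · exact hb.trans h
  · rw [abs_lt] at h
    rw [(toIocMod_eq_self _).2 ⟨h.1, by linarith [h.2]⟩]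

open Real Complex in
lemma dist_exp_exp_le_pr (x y : ℝ) :
    dist (Complex.exp (x * Complex.I)) (Complex.exp (y * Complex.I)) ≤ |x - y| := by
  have h1 : ‖Complex.exp (x * Complex.I)‖ = 1 := by
    simp [Complex.norm_exp_ofReal_mul_I]
  have h2 : ‖Complex.exp (y * Complex.I)‖ = 1 := by
    simp [Complex.norm_exp_ofReal_mul_I]
  calc dist (Complex.exp (x * Complex.I)) (Complex.exp (y * Complex.I))
      = ‖Complex.exp (x * Complex.I) - Complex.exp (y * Complex.I)‖ := dist_eq_norm _ _
    _ ≤ InnerProductGeometry.angle (Complex.exp (x * Complex.I)) (Complex.exp (y * Complex.I)) :=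
        Complex.norm_sub_le_angle h1 h2
    _ = |toIocMod Real.two_pi_pos (-π) (x - y)| := Complex.angle_exp_exp x y
    _ ≤ |x - y| := abs_toIocMod_le_pr _

open Real in
lemma ccwArc_exp_pr (a b : ℝ) (h1 : a < b) (h2 : b < a + 2 * π) :
    ccwArc (Complex.exp (a * Complex.I)) (Complex.exp (b * Complex.I)) = b - a := by
  have hdiv : Complex.exp (b * Complex.I) / Complex.exp (a * Complex.I)
      = Complex.exp (((b - a : ℝ) : ℂ) * Complex.I) := by
    rw [← Complex.exp_sub]; push_cast; ring_nf
  unfold ccwArc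
  rw [hdiv, Complex.arg_exp_mul_I]
  set t := b - a with ht
  have hpi := Real.pi_pos
  rcases le_or_gt t π with h | h
  · rw [(toIocMod_eq_self _).2 ⟨by linarith, by linarith⟩, if_pos (by linarith)]
  · have heq : toIocMod Real.two_pi_pos (-π) t = t - 2 * π := by
      rw [show t = (t - 2 * π) + 2 * π by ring, toIocMod_add_right,
        (toIocMod_eq_self _).2 ⟨by linarith, by linarith⟩]
      ring
    rw [heq, if_neg (by linarith)]
    ring

theorem prerect (δ : ℝ) (hδ : 0 < δ) (σ : ℕ → (Fin 4 → S1))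
    (hsig : ∀ n, CCW4 (σ n))
    (hdiam : ∀ n, δ < Metric.diam (Set.range (fun k => (σ n k : ℂ))))
    (hΛ : Filter.Tendsto (fun n => Lam (σ n)) Filter.atTop (nhds 0)) :
    Filter.Tendsto (fun n => ccwArc (σ n 0 : ℂ) (σ n 1 : ℂ)) Filter.atTop (nhds 0) ∧
    Filter.Tendsto (fun n => ccwArc (σ n 2 : ℂ) (σ n 3 : ℂ)) Filter.atTop (nhds 0) ∧
    ∃ c > (0:ℝ), ∃ N : ℕ, ∀ n ≥ N,
      c ≤ ccwArc (σ n 1 : ℂ) (σ n 2 : ℂ) ∧ c ≤ ccwArc (σ n 3 : ℂ) (σ n 0 : ℂ) := by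
  have hpi := Real.pi_pos
  choose θ hθ using hsig
  -- arc formulas
  have h0 : ∀ n, ccwArc (σ n 0 : ℂ) (σ n 1 : ℂ) = θ n 1 - θ n 0 := by
    intro n
    obtain ⟨he, h01, h12, h23, h30⟩ := hθ n
    rw [he 0, he 1]
    exact ccwArc_exp_pr _ _ h01 (by linarith)
  have h1 : ∀ n, ccwArc (σ n 1 : ℂ) (σ n 2 : ℂ) = θ n 2 - θ n 1 := by
    intro n
    obtain ⟨he, h01, h12, h23, h30⟩ := hθ n
    rw [he 1, he 2]
    exact ccwArc_exp_pr _ _ h12 (by linarith)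
  have h2 : ∀ n, ccwArc (σ n 2 : ℂ) (σ n 3 : ℂ) = θ n 3 - θ n 2 := by
    intro n
    obtain ⟨he, h01, h12, h23, h30⟩ := hθ n
    rw [he 2, he 3]
    exact ccwArc_exp_pr _ _ h23 (by linarith)
  have hexp_per : ∀ x : ℝ, Complex.exp (((x + 2 * Real.pi : ℝ) : ℂ) * Complex.I)
      = Complex.exp ((x : ℝ) * Complex.I) := by
    intro x
    rw [show ((x + 2 * Real.pi : ℝ) : ℂ) * Complex.I
        = (x : ℝ) * Complex.I + 2 * Real.pi * Complex.I by push_cast; ring,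
      Complex.exp_add, Complex.exp_two_pi_mul_I, mul_one]
  have h3 : ∀ n, ccwArc (σ n 3 : ℂ) (σ n 0 : ℂ) = θ n 0 + 2 * Real.pi - θ n 3 := by
    intro n
    obtain ⟨he, h01, h12, h23, h30⟩ := hθ n
    rw [he 3, he 0, ← hexp_per (θ n 0)]
    exact ccwArc_exp_pr _ _ (by linarith) (by linarith)
  -- positivity of each arc in terms of θ
  have hord : ∀ n, θ n 0 < θ n 1 ∧ θ n 1 < θ n 2 ∧ θ n 2 < θ n 3 ∧
      θ n 3 < θ n 0 + 2 * Real.pi := fun n => (hθ n).2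
  -- numerator tends to zero
  have hnum : Tendsto (fun n => (θ n 1 - θ n 0) + (θ n 3 - θ n 2)) atTop (nhds 0) := by
    have hb : ∀ n, (θ n 1 - θ n 0) + (θ n 3 - θ n 2) ≤ 2 * Real.pi * Lam (σ n) := by
      intro n
      obtain ⟨h01, h12, h23, h30⟩ := hord n
      have hden : 0 < (θ n 2 - θ n 1) + (θ n 0 + 2 * Real.pi - θ n 3) := by linarith
      have hLam : Lam (σ n) = ((θ n 1 - θ n 0) + (θ n 3 - θ n 2)) /
          ((θ n 2 - θ n 1) + (θ n 0 + 2 * Real.pi - θ n 3)) := by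
        unfold Lam; rw [h0 n, h1 n, h2 n, h3 n]
      rw [hLam, ← mul_div_assoc, le_div_iff₀ hden]
      have hnn : 0 ≤ (θ n 1 - θ n 0) + (θ n 3 - θ n 2) := by linarith
      nlinarith
    have hlb : ∀ n, (0:ℝ) ≤ (θ n 1 - θ n 0) + (θ n 3 - θ n 2) := by
      intro n; obtain ⟨h01, h12, h23, h30⟩ := hord n; linarith
    have hg : Tendsto (fun n => 2 * Real.pi * Lam (σ n)) atTop (nhds 0) := by
      have := hΛ.const_mul (2 * Real.pi)
      simpa using this
    exact squeeze_zero hlb hb hg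
  have ht0 : Tendsto (fun n => θ n 1 - θ n 0) atTop (nhds 0) := by
    apply squeeze_zero (fun n => by linarith [(hord n).1]) (fun n => ?_) hnum
    obtain ⟨h01, h12, h23, h30⟩ := hord n; linarith
  have ht2 : Tendsto (fun n => θ n 3 - θ n 2) atTop (nhds 0) := by
    apply squeeze_zero (fun n => by linarith [(hord n).2.2.1]) (fun n => ?_) hnum
    obtain ⟨h01, h12, h23, h30⟩ := hord n; linarith
  refine ⟨by simpa only [h0] using ht0, by simpa only [h2] using ht2, ?_⟩
  -- diameter bounds
  have hdiam1 : ∀ n, Metric.diam (Set.range (fun k => (σ n k : ℂ))) ≤ θ n 3 - θ n 0 := by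
    intro n
    obtain ⟨h01, h12, h23, h30⟩ := hord n
    apply Metric.diam_le_of_forall_dist_le (by linarith)
    rintro x ⟨j, rfl⟩ y ⟨k, rfl⟩
    show dist ((σ n j : ℂ)) ((σ n k : ℂ)) ≤ _
    rw [(hθ n).1 j, (hθ n).1 k]
    refine (dist_exp_exp_le_pr _ _).trans ?_
    have hmem : ∀ i : Fin 4, θ n 0 ≤ θ n i ∧ θ n i ≤ θ n 3 := by
      intro i
      match i with
      | 0 => exact ⟨le_rfl, by linarith⟩
      | 1 => exact ⟨by linarith, by linarith⟩
      | 2 => exact ⟨by linarith, by linarith⟩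
      | 3 => exact ⟨by linarith, le_rfl⟩
    obtain ⟨hj1, hj2⟩ := hmem j
    obtain ⟨hk1, hk2⟩ := hmem k
    rw [abs_le]; constructor <;> linarith
  have hdiam2 : ∀ n, Metric.diam (Set.range (fun k => (σ n k : ℂ))) ≤
      θ n 1 + 2 * Real.pi - θ n 2 := by
    intro n
    obtain ⟨h01, h12, h23, h30⟩ := hord n
    apply Metric.diam_le_of_forall_dist_le (by linarith)
    rintro x ⟨j, rfl⟩ y ⟨k, rfl⟩
    show dist ((σ n j : ℂ)) ((σ n k : ℂ)) ≤ _
    -- use shifted angle representatives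
    have hrep : ∀ i : Fin 4, ∃ φ : ℝ, (σ n i : ℂ) = Complex.exp ((φ : ℝ) * Complex.I) ∧
        θ n 2 ≤ φ ∧ φ ≤ θ n 1 + 2 * Real.pi := by
      intro i
      match i with
      | 0 => exact ⟨θ n 0 + 2 * Real.pi, by rw [hexp_per]; exact (hθ n).1 0,
          by linarith, by linarith⟩
      | 1 => exact ⟨θ n 1 + 2 * Real.pi, by rw [hexp_per]; exact (hθ n).1 1,
          by linarith, le_rfl⟩
      | 2 => exact ⟨θ n 2, (hθ n).1 2, le_rfl, by linarith⟩
      | 3 => exact ⟨θ n 3, (hθ n).1 3, by linarith, by linarith⟩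
    obtain ⟨φj, hφj, hφj1, hφj2⟩ := hrep j
    obtain ⟨φk, hφk, hφk1, hφk2⟩ := hrep k
    rw [hφj, hφk]
    refine (dist_exp_exp_le_pr _ _).trans ?_
    rw [abs_le]; constructor <;> linarith
  -- eventually numerator < δ/2
  have hev : ∀ᶠ n in atTop, (θ n 1 - θ n 0) + (θ n 3 - θ n 2) < δ / 2 :=
    hnum.eventually (eventually_lt_nhds (by linarith : (0:ℝ) < δ / 2))
  obtain ⟨N, hN⟩ := eventually_atTop.1 hev
  refine ⟨δ / 2, by linarith, N, fun n hn => ?_⟩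
  obtain ⟨h01, h12, h23, h30⟩ := hord n
  have hd := hdiam n
  have hb1 := hdiam1 n
  have hb2 := hdiam2 n
  have hsmall := hN n hn
  rw [h1 n, h3 n]
  constructor <;> linarith
end
end

section
/- Let A ⊆ Σ be extensive. Then the set of points of S¹ that do not occur as a coordinate (vertex) of any member of A has at most 4 elements. If, additionally, A contains elements whose vertex sets have arbitrarily small Euclidean diameter, then the set of points of S¹ that are not a vertex of any member of A has at most 2 elements. -/
open Set Filter

noncomputable section

namespace Ext

open Complex

lemma pi_pos : (0:ℝ) < Real.pi := Real.pi_pos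

lemma ccwArc_pos {x y : ℂ} (hx : ‖x‖ = 1) (hy : ‖y‖ = 1)
    (hxy : y ≠ x) : 0 < ccwArc x y := by
  have hx0 : x ≠ 0 := by intro h; simp [h] at hx
  have hz : ‖y / x‖ = 1 := by rw [norm_div, hx, hy]; norm_num
  have hz1 : y / x ≠ 1 := by
    intro h
    exact hxy (by field_simp at h; exact h)
  have harg : (y / x).arg ≠ 0 := by
    intro h
    rw [Complex.arg_eq_zero_iff] at h
    apply hz1
    have : y / x = ((y/x).re : ℂ) := Complex.ext (by simp) (by simp [h.2])
    rw [this] at hz ⊢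
    rw [Complex.norm_real, Real.norm_eq_abs, _root_.abs_of_nonneg h.1] at hz
    rw [hz]; norm_num
  unfold ccwArc
  split_ifs with h
  · exact lt_of_le_of_ne h (Ne.symm harg)
  · push_neg at h
    have := Complex.neg_pi_lt_arg (y / x)
    linarith

lemma ccwArc_lt_two_pi {x y : ℂ} : ccwArc x y < 2 * Real.pi := by
  have h1 := Complex.arg_le_pi (y / x)
  have h2 := Complex.neg_pi_lt_arg (y / x)
  have := pi_pos
  unfold ccwArc
  split_ifs with h <;> linarith

lemma exp_ccwArc {x y : ℂ} (hx : ‖x‖ = 1) (hy : ‖y‖ = 1) :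
    Complex.exp ((ccwArc x y : ℝ) * Complex.I) = y / x := by
  have hz : ‖y / x‖ = 1 := by rw [norm_div, hx, hy]; norm_num
  have key := Complex.norm_mul_exp_arg_mul_I (y / x)
  rw [hz] at key
  simp only [ofReal_one, one_mul] at key
  unfold ccwArc
  split_ifs with h
  · exact key
  · rw [show (((y/x).arg + 2*Real.pi : ℝ) : ℂ) * I = (y/x).arg * I + 2*Real.pi*I by
      push_cast; ring]
    rw [Complex.exp_add, Complex.exp_two_pi_mul_I, mul_one, key]

lemma arg_exp_of_Ioc {u : ℝ} (h1 : -Real.pi < u) (h2 : u ≤ Real.pi) :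
    (Complex.exp ((u:ℝ) * Complex.I)).arg = u := by
  rw [Complex.exp_mul_I]
  exact Complex.arg_cos_add_sin_mul_I ⟨h1, h2⟩

lemma ccwArc_mul_exp {x : ℂ} (hx : ‖x‖ = 1) {u : ℝ}
    (h0 : 0 < u) (h2 : u < 2 * Real.pi) :
    ccwArc x (x * Complex.exp ((u:ℝ) * Complex.I)) = u := by
  have hx0 : x ≠ 0 := by intro h; simp [h] at hx
  have hdiv : x * Complex.exp ((u:ℝ) * Complex.I) / x = Complex.exp ((u:ℝ) * Complex.I) := by
    field_simp
  have hpi := pi_pos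
  unfold ccwArc
  rw [hdiv]
  rcases le_or_gt u Real.pi with h | h
  · rw [arg_exp_of_Ioc (by linarith) h]
    rw [if_pos (le_of_lt h0)]
  · have he : Complex.exp ((u:ℝ) * Complex.I) = Complex.exp (((u - 2*Real.pi : ℝ)) * Complex.I) := by
      rw [show (((u - 2*Real.pi : ℝ)) : ℂ) * Complex.I = (u:ℝ)*Complex.I - 2*Real.pi*Complex.I by
        push_cast; ring]
      rw [Complex.exp_sub, Complex.exp_two_pi_mul_I, div_one]
    rw [he, arg_exp_of_Ioc (by linarith) (by linarith)]
    rw [if_neg (by linarith)]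
    ring

lemma exp_eq_exp_real {s t : ℝ}
    (h : Complex.exp ((s:ℝ) * Complex.I) = Complex.exp ((t:ℝ) * Complex.I))
    (hd : |s - t| < 2 * Real.pi) : s = t := by
  rw [Complex.exp_eq_exp_iff_exists_int] at h
  obtain ⟨n, hn⟩ := h
  have : ((s : ℂ) * Complex.I).im = ((t:ℝ) * Complex.I + (n:ℂ) * (2*(Real.pi:ℂ)*Complex.I)).im := by
    rw [hn]
  simp at this
  have hsn : s = t + n * (2 * Real.pi) := by
    simpa using this
  have hpi := pi_pos
  have hn0 : n = 0 := by
    have h1 : |(n:ℝ)| * (2*Real.pi) < 2*Real.pi := by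
      have hst : s - t = (n:ℝ) * (2*Real.pi) := by linarith
      rw [hst, abs_mul, _root_.abs_of_pos (by linarith : (0:ℝ) < 2*Real.pi)] at hd
      exact hd
    have h2 : |(n:ℝ)| < 1 := by
      by_contra hc; push_neg at hc; nlinarith
    have h3 := abs_lt.mp h2
    have h4 : (-1:ℤ) < n := by exact_mod_cast h3.1
    have h5 : (n:ℤ) < 1 := by exact_mod_cast h3.2
    omega
  rw [hn0] at hsn; simpa using hsn


lemma ccwArc_formula {x y : ℂ} (h : (y / x).arg ≠ 0) :
    ccwArc x y = Real.pi + (-(y / x)).arg := by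
  set z := y / x with hz
  unfold ccwArc
  rcases lt_trichotomy z.im 0 with him | him | him
  · rw [if_neg (by rw [not_le, ← hz, Complex.arg_neg_iff]; exact him)]
    rw [Complex.arg_neg_eq_arg_add_pi_of_im_neg him]; ring
  · have hre : z.re < 0 := by
      rcases lt_trichotomy z.re 0 with h' | h' | h'
      · exact h'
      · exfalso; exact h (Complex.arg_eq_zero_iff.mpr ⟨by simp [h'], him⟩)
      · exfalso; exact h (Complex.arg_eq_zero_iff.mpr ⟨le_of_lt h', him⟩)
    have h1 : z.arg = Real.pi := Complex.arg_eq_pi_iff.mpr ⟨hre, him⟩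
    have h2 : (-z).arg = 0 := Complex.arg_eq_zero_iff.mpr ⟨by simp; linarith, by simp [him]⟩
    rw [if_pos (by rw [h1]; exact le_of_lt pi_pos), h1, h2]; ring
  · rw [if_pos (Complex.arg_nonneg_iff.mpr (le_of_lt him))]
    rw [Complex.arg_neg_eq_arg_sub_pi_of_im_pos him]; ring

lemma arg_ne_zero_unit {x y : ℂ} (hx : ‖x‖ = 1) (hy : ‖y‖ = 1)
    (hxy : y ≠ x) : (y / x).arg ≠ 0 := by
  intro h
  rw [Complex.arg_eq_zero_iff] at h
  have hz : ‖y / x‖ = 1 := by rw [norm_div, hx, hy]; norm_num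
  have hx0 : x ≠ 0 := by intro h'; simp [h'] at hx
  apply hxy
  have h1 : y / x = ((y/x).re : ℂ) := Complex.ext (by simp) (by simp [h.2])
  rw [h1, Complex.norm_real, Real.norm_eq_abs, _root_.abs_of_nonneg h.1] at hz
  have : y / x = 1 := by rw [h1, hz]; norm_num
  field_simp at this
  exact this

lemma ccwArc_continuousAt {u v : ℂ} (hu : ‖u‖ = 1) (hv : ‖v‖ = 1)
    (huv : v ≠ u) :
    ContinuousAt (fun p : ℂ × ℂ => ccwArc p.1 p.2) (u, v) := by
  have hu0 : u ≠ 0 := by intro h; simp [h] at hu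
  have harg : (v / u).arg ≠ 0 := arg_ne_zero_unit hu hv huv
  have hWopen : IsOpen {p : ℂ × ℂ | p.1 ≠ 0 ∧ (p.2 / p.1).arg ≠ 0} := by
    have hcl : IsClosed {z : ℂ | 0 ≤ z.re ∧ z.im = 0} :=
      IsClosed.inter (isClosed_le continuous_const Complex.continuous_re)
        (isClosed_eq Complex.continuous_im continuous_const)
    have : {p : ℂ × ℂ | p.1 ≠ 0 ∧ (p.2 / p.1).arg ≠ 0}
        = {p : ℂ × ℂ | p.1 ≠ 0} ∩ (fun p : ℂ × ℂ => p.2 / p.1) ⁻¹' {z : ℂ | 0 ≤ z.re ∧ z.im = 0}ᶜ := by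
      ext p
      simp only [Set.mem_setOf_eq, Set.mem_inter_iff, Set.mem_preimage, Set.mem_compl_iff]
      constructor
      · rintro ⟨h1, h2⟩; exact ⟨h1, fun hc => h2 (Complex.arg_eq_zero_iff.mpr hc)⟩
      · rintro ⟨h1, h2⟩; exact ⟨h1, fun hc => h2 (Complex.arg_eq_zero_iff.mp hc)⟩
    rw [this]
    apply ContinuousOn.isOpen_inter_preimage
    · exact ContinuousOn.div (continuous_snd.continuousOn) (continuous_fst.continuousOn)
        (fun p hp => hp)
    · exact isOpen_ne_fun continuous_fst continuous_const
    · exact hcl.isOpen_compl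
  have hWmem : (u, v) ∈ {p : ℂ × ℂ | p.1 ≠ 0 ∧ (p.2 / p.1).arg ≠ 0} := ⟨hu0, harg⟩
  have heq : ∀ p ∈ {p : ℂ × ℂ | p.1 ≠ 0 ∧ (p.2 / p.1).arg ≠ 0},
      ccwArc p.1 p.2 = Real.pi + (-(p.2 / p.1)).arg := fun p hp => ccwArc_formula hp.2
  have hslit : -(v / u) ∈ Complex.slitPlane := by
    rw [Complex.mem_slitPlane_iff]
    rcases eq_or_ne (v/u).im 0 with him | him
    · left
      simp only [Complex.neg_re, Complex.neg_im]
      have : (v/u).re < 0 := by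
        rcases lt_or_ge (v/u).re 0 with h' | h'
        · exact h'
        · exact absurd (Complex.arg_eq_zero_iff.mpr ⟨h', him⟩) harg
      linarith
    · right; simpa using him
  have hca : ContinuousAt (fun p : ℂ × ℂ => Real.pi + (-(p.2 / p.1)).arg) (u, v) := by
    apply ContinuousAt.add continuousAt_const
    have hdiv : ContinuousAt (fun p : ℂ × ℂ => p.2 / p.1) (u, v) :=
      ContinuousAt.div continuousAt_snd continuousAt_fst hu0
    exact ContinuousAt.comp (x := (u,v)) (g := Complex.arg)
      (f := fun p : ℂ × ℂ => -(p.2 / p.1)) (Complex.continuousAt_arg hslit) hdiv.neg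
  apply hca.congr
  filter_upwards [hWopen.mem_nhds hWmem] with p hp
  exact (heq p hp).symm

lemma abs_S1 (z : S1) : ‖(z : ℂ)‖ = 1 := by
  have := z.2
  rw [Metric.mem_sphere, Complex.dist_eq, sub_zero] at this
  exact this

lemma chord_eq {a : ℝ} (h0 : 0 ≤ a) (h2 : a ≤ 2 * Real.pi) :
    ‖Complex.exp ((a:ℝ) * Complex.I) - 1‖ = 2 * Real.sin (a / 2) := by
  have hsin : 0 ≤ Real.sin (a / 2) :=
    Real.sin_nonneg_of_nonneg_of_le_pi (by linarith) (by linarith)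
  have hns : Complex.normSq (Complex.exp ((a:ℝ) * Complex.I) - 1) = 4 * Real.sin (a/2)^2 := by
    have h1 : Real.sin (a/2)^2 = 1/2 - Real.cos (2 * (a/2)) / 2 := Real.sin_sq_eq_half_sub _
    have h2' : (2 : ℝ) * (a/2) = a := by ring
    rw [h2'] at h1
    have hpyth := Real.sin_sq_add_cos_sq a
    simp only [Complex.normSq_apply, Complex.sub_re, Complex.sub_im, Complex.one_re,
      Complex.one_im, Complex.exp_ofReal_mul_I_re, Complex.exp_ofReal_mul_I_im]
    nlinarith [h1, hpyth]
  rw [Complex.norm_def, hns, show 4 * Real.sin (a/2)^2 = (2 * Real.sin (a/2))^2 by ring,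
    Real.sqrt_sq (by linarith)]

lemma chord_le_arc {a : ℝ} (h0 : 0 ≤ a) (h2 : a ≤ 2 * Real.pi) :
    ‖Complex.exp ((a:ℝ) * Complex.I) - 1‖ ≤ a := by
  rw [chord_eq h0 h2]
  have := Real.sin_le (by linarith : (0:ℝ) ≤ a/2)
  linarith

lemma arc_le_chord {a : ℝ} (h0 : 0 ≤ a) (h2 : a ≤ Real.pi) :
    a ≤ Real.pi / 2 * ‖Complex.exp ((a:ℝ) * Complex.I) - 1‖ := by
  have hπ := pi_pos
  rw [chord_eq h0 (by linarith)]
  have hs := Real.mul_le_sin (by linarith : (0:ℝ) ≤ a/2) (by linarith : a/2 ≤ Real.pi/2)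
  have key : 2 / Real.pi * (a/2) * Real.pi = a := by field_simp
  have := mul_le_mul_of_nonneg_right hs (le_of_lt hπ)
  rw [key] at this
  linarith

lemma rep_mul {s u : ℝ} :
    Complex.exp ((s:ℝ) * Complex.I) * Complex.exp ((u:ℝ) * Complex.I)
      = Complex.exp (((s + u : ℝ)) * Complex.I) := by
  rw [← Complex.exp_add]; congr 1; push_cast; ring

lemma rep_period (s : ℝ) :
    Complex.exp (((s + 2 * Real.pi : ℝ)) * Complex.I) = Complex.exp ((s:ℝ) * Complex.I) := by
  rw [show (((s + 2*Real.pi : ℝ)) : ℂ) * Complex.I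
      = (s:ℝ) * Complex.I + 2 * (Real.pi:ℂ) * Complex.I by push_cast; ring]
  rw [Complex.exp_add, Complex.exp_two_pi_mul_I, mul_one]

def arcL (σ : Fin 4 → S1) (j : Fin 4) : ℝ := ccwArc ((σ j : ℂ)) ((σ (j+1) : ℂ))

lemma ccwArc_of_rep {x y : ℂ} (hx : ‖x‖ = 1) {u : ℝ}
    (h0 : 0 < u) (h2 : u < 2 * Real.pi)
    (hrep : y = x * Complex.exp ((u:ℝ) * Complex.I)) : ccwArc x y = u := by
  rw [hrep]; exact ccwArc_mul_exp hx h0 h2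

lemma arc_vals {σ : Fin 4 → S1} {θ : Fin 4 → ℝ}
    (hθ : ∀ k, (σ k : ℂ) = Complex.exp ((θ k : ℝ) * Complex.I))
    (h01 : θ 0 < θ 1) (h12 : θ 1 < θ 2) (h23 : θ 2 < θ 3) (h30 : θ 3 < θ 0 + 2 * Real.pi) :
    arcL σ 0 = θ 1 - θ 0 ∧ arcL σ 1 = θ 2 - θ 1 ∧ arcL σ 2 = θ 3 - θ 2 ∧
      arcL σ 3 = θ 0 + 2 * Real.pi - θ 3 := by
  have hπ := pi_pos
  refine ⟨?_, ?_, ?_, ?_⟩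
  · apply ccwArc_of_rep (abs_S1 _) (by linarith) (by linarith)
    show (σ 1 : ℂ) = _
    rw [hθ 0, hθ 1, rep_mul]; norm_num
  · apply ccwArc_of_rep (abs_S1 _) (by linarith) (by linarith)
    show (σ 2 : ℂ) = _
    rw [hθ 1, hθ 2, rep_mul]; norm_num
  · apply ccwArc_of_rep (abs_S1 _) (by linarith) (by linarith)
    show (σ 3 : ℂ) = _
    rw [hθ 2, hθ 3, rep_mul]; norm_num
  · apply ccwArc_of_rep (abs_S1 _) (by linarith) (by linarith)
    show (σ 0 : ℂ) = _
    rw [hθ 3, hθ 0, rep_mul, show θ 3 + (θ 0 + 2*Real.pi - θ 3) = θ 0 + 2*Real.pi by ring,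
      rep_period]

lemma arc_facts {σ : Fin 4 → S1} (hσ : CCW4 σ) :
    (∀ j, 0 < arcL σ j) ∧ (∀ j, arcL σ j < 2 * Real.pi) ∧
    arcL σ 0 + arcL σ 1 + arcL σ 2 + arcL σ 3 = 2 * Real.pi := by
  obtain ⟨θ, hθ, h01, h12, h23, h30⟩ := hσ
  obtain ⟨k01, k12, k23, k30⟩ := arc_vals hθ h01 h12 h23 h30
  have hπ := pi_pos
  refine ⟨?_, ?_, by rw [k01, k12, k23, k30]; ring⟩
  · intro j
    fin_cases j
    · show 0 < arcL σ 0; linarith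
    · show 0 < arcL σ 1; linarith
    · show 0 < arcL σ 2; linarith
    · show 0 < arcL σ 3; linarith
  · intro j
    fin_cases j
    · show arcL σ 0 < 2 * Real.pi; linarith
    · show arcL σ 1 < 2 * Real.pi; linarith
    · show arcL σ 2 < 2 * Real.pi; linarith
    · show arcL σ 3 < 2 * Real.pi; linarith

lemma fin4 (j : Fin 4) : j = 0 ∨ j = 1 ∨ j = 2 ∨ j = 3 := by
  fin_cases j
  exacts [Or.inl rfl, Or.inr (Or.inl rfl), Or.inr (Or.inr (Or.inl rfl)),
    Or.inr (Or.inr (Or.inr rfl))]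

lemma mem_arc_unique {σ : Fin 4 → S1} (hσ : CCW4 σ) {x : S1} (hx : ∀ k, σ k ≠ x) :
    ∃! j : Fin 4, ccwArc ((σ j : ℂ)) ((x : ℂ)) < arcL σ j := by
  obtain ⟨θ, hθ, h01, h12, h23, h30⟩ := hσ
  obtain ⟨k01, k12, k23, k30⟩ := arc_vals hθ h01 h12 h23 h30
  have hπ := pi_pos
  have hxC : ∀ j : Fin 4, (x : ℂ) ≠ (σ j : ℂ) := fun j h => hx j (Subtype.ext h.symm)
  set c := ccwArc ((σ 0 : ℂ)) ((x:ℂ)) with hc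
  have hc0 : 0 < c := ccwArc_pos (abs_S1 _) (abs_S1 _) (hxC 0)
  have hc2 : c < 2 * Real.pi := ccwArc_lt_two_pi
  set t := θ 0 + c with htdef
  have hxrep : (x : ℂ) = Complex.exp ((t:ℝ) * Complex.I) := by
    have h1 := exp_ccwArc (abs_S1 (σ 0)) (abs_S1 x)
    rw [← hc] at h1
    have hσ0 : (σ 0 : ℂ) ≠ 0 := by
      intro h; have := abs_S1 (σ 0); rw [h] at this; simp at this
    have h2 : (x:ℂ) = (σ 0 : ℂ) * Complex.exp ((c:ℝ) * Complex.I) := by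
      rw [h1]; field_simp
    rw [h2, hθ 0, rep_mul]
  have harc : ∀ (j : Fin 4) (u : ℝ), 0 < u → u < 2 * Real.pi →
      (t = θ j + u ∨ t + 2 * Real.pi = θ j + u) → ccwArc ((σ j : ℂ)) ((x:ℂ)) = u := by
    intro j u h0 h2 hcase
    apply ccwArc_of_rep (abs_S1 _) h0 h2
    rw [hθ j, rep_mul, hxrep]
    rcases hcase with h | h
    · rw [← h]
    · rw [← h, rep_period]
  have htne : ∀ j : Fin 4, t ≠ θ j := by
    intro j h
    apply hx j
    apply Subtype.ext
    rw [hθ j, hxrep, h]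
  have ht0 : θ 0 < t := by linarith
  have ht4 : t < θ 0 + 2 * Real.pi := by linarith
  have v0 : ccwArc ((σ 0 : ℂ)) ((x:ℂ)) = t - θ 0 := by rw [← hc, htdef]; ring
  have v1a : θ 1 < t → ccwArc ((σ 1 : ℂ)) ((x:ℂ)) = t - θ 1 :=
    fun h => harc 1 _ (by linarith) (by linarith) (Or.inl (by ring))
  have v1b : t < θ 1 → ccwArc ((σ 1 : ℂ)) ((x:ℂ)) = t + 2 * Real.pi - θ 1 :=
    fun h => harc 1 _ (by linarith) (by linarith) (Or.inr (by ring))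
  have v2a : θ 2 < t → ccwArc ((σ 2 : ℂ)) ((x:ℂ)) = t - θ 2 :=
    fun h => harc 2 _ (by linarith) (by linarith) (Or.inl (by ring))
  have v2b : t < θ 2 → ccwArc ((σ 2 : ℂ)) ((x:ℂ)) = t + 2 * Real.pi - θ 2 :=
    fun h => harc 2 _ (by linarith) (by linarith) (Or.inr (by ring))
  have v3a : θ 3 < t → ccwArc ((σ 3 : ℂ)) ((x:ℂ)) = t - θ 3 :=
    fun h => harc 3 _ (by linarith) (by linarith) (Or.inl (by ring))
  have v3b : t < θ 3 → ccwArc ((σ 3 : ℂ)) ((x:ℂ)) = t + 2 * Real.pi - θ 3 :=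
    fun h => harc 3 _ (by linarith) (by linarith) (Or.inr (by ring))
  rcases lt_trichotomy t (θ 1) with c1 | c1 | c1
  · refine ⟨0, by show ccwArc ((σ 0 : ℂ)) ((x:ℂ)) < arcL σ 0; rw [v0, k01]; linarith, ?_⟩
    intro j' hj'
    rcases fin4 j' with h|h|h|h <;> subst h
    · rfl
    · exfalso; rw [v1b c1, k12] at hj'; linarith
    · exfalso; rw [v2b (by linarith), k23] at hj'; linarith
    · exfalso; rw [v3b (by linarith), k30] at hj'; linarith
  · exact absurd c1 (htne 1)
  · rcases lt_trichotomy t (θ 2) with c2 | c2 | c2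
    · refine ⟨1, by show ccwArc ((σ 1 : ℂ)) ((x:ℂ)) < arcL σ 1; rw [v1a c1, k12]; linarith, ?_⟩
      intro j' hj'
      rcases fin4 j' with h|h|h|h <;> subst h
      · exfalso; rw [v0, k01] at hj'; linarith
      · rfl
      · exfalso; rw [v2b c2, k23] at hj'; linarith
      · exfalso; rw [v3b (by linarith), k30] at hj'; linarith
    · exact absurd c2 (htne 2)
    · rcases lt_trichotomy t (θ 3) with c3 | c3 | c3
      · refine ⟨2, by show ccwArc ((σ 2 : ℂ)) ((x:ℂ)) < arcL σ 2; rw [v2a c2, k23]; linarith, ?_⟩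
        intro j' hj'
        rcases fin4 j' with h|h|h|h <;> subst h
        · exfalso; rw [v0, k01] at hj'; linarith
        · exfalso; rw [v1a c1, k12] at hj'; linarith
        · rfl
        · exfalso; rw [v3b c3, k30] at hj'; linarith
      · exact absurd c3 (htne 3)
      · refine ⟨3, by show ccwArc ((σ 3 : ℂ)) ((x:ℂ)) < arcL σ 3; rw [v3a c3, k30]; linarith, ?_⟩
        intro j' hj'
        rcases fin4 j' with h|h|h|h <;> subst h
        · exfalso; rw [v0, k01] at hj'; linarith
        · exfalso; rw [v1a c1, k12] at hj'; linarith
        · exfalso; rw [v2a c2, k23] at hj'; linarith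
        · rfl

lemma vertex_ne {σ : Fin 4 → S1} (hσ : CCW4 σ) (j : Fin 4) :
    ((σ (j+1) : ℂ)) ≠ ((σ j : ℂ)) := by
  intro h
  have hpos := (arc_facts hσ).1 j
  have hσ0 : (σ j : ℂ) ≠ 0 := by
    intro h0; have := abs_S1 (σ j); rw [h0] at this; simp at this
  rw [arcL, h] at hpos
  unfold ccwArc at hpos
  rw [div_self hσ0] at hpos
  simp [Complex.arg_one] at hpos

attribute [local irreducible] ccwArc

open Classical in
def Gx (x : S1) (σ : Fin 4 → S1) : Fin 4 :=
  if h : ∃ j : Fin 4, ccwArc ((σ j : ℂ)) ((x : ℂ)) < arcL σ j then h.choose else 0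

lemma Gx_spec {σ : Fin 4 → S1} (hσ : CCW4 σ) {x : S1} (hx : ∀ k, σ k ≠ x) :
    ccwArc ((σ (Gx x σ) : ℂ)) ((x : ℂ)) < arcL σ (Gx x σ) := by
  obtain ⟨j, hj, _⟩ := mem_arc_unique hσ hx
  have hex : ∃ j : Fin 4, ccwArc ((σ j : ℂ)) ((x : ℂ)) < arcL σ j := ⟨j, hj⟩
  rw [Gx, dif_pos hex]
  exact hex.choose_spec

lemma Gx_eq {σ : Fin 4 → S1} (hσ : CCW4 σ) {x : S1} (hx : ∀ k, σ k ≠ x) {j : Fin 4}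
    (hj : ccwArc ((σ j : ℂ)) ((x : ℂ)) < arcL σ j) : Gx x σ = j := by
  obtain ⟨i, _, huniq⟩ := mem_arc_unique hσ hx
  rw [huniq _ (Gx_spec hσ hx), ← huniq _ hj]

lemma Gx_const {A : Set (Fin 4 → S1)} (hA : ∀ σ ∈ A, CCW4 σ) (hconn : IsConnected A)
    {x : S1} (hx : ∀ σ ∈ A, ∀ k, σ k ≠ x) :
    ∀ σ ∈ A, ∀ τ ∈ A, Gx x σ = Gx x τ := by
  have hcont : ContinuousOn (Gx x) A := by
    intro σ hσA
    set j := Gx x σ with hjdef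
    have hσcc := hA σ hσA
    have hmem := Gx_spec hσcc (hx σ hσA)
    rw [← hjdef] at hmem
    have hc1 : Continuous (fun τ : Fin 4 → S1 => ((τ (j+1) : ℂ))) :=
      (continuous_apply (j+1)).subtype_val
    have hc2 : Continuous (fun τ : Fin 4 → S1 => ((τ j : ℂ))) :=
      (continuous_apply j).subtype_val
    set V : Set (Fin 4 → S1) :=
      {τ | ((τ (j+1) : ℂ)) ≠ ((τ j : ℂ)) ∧ ((x:ℂ)) ≠ ((τ j : ℂ))} with hVdef
    have hVopen : IsOpen V :=
      (isOpen_ne_fun hc1 hc2).inter (isOpen_ne_fun continuous_const hc2)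
    have hf : ContinuousOn
        (fun τ : Fin 4 → S1 => arcL τ j - ccwArc ((τ j : ℂ)) ((x:ℂ))) V := by
      intro τ hτ
      apply ContinuousAt.continuousWithinAt
      have hpair1 : ContinuousAt (fun τ : Fin 4 → S1 => (((τ j : ℂ)), ((τ (j+1) : ℂ)))) τ :=
        (hc2.prodMk hc1).continuousAt
      have hA1 : ContinuousAt (fun τ : Fin 4 → S1 => ccwArc ((τ j:ℂ)) ((τ (j+1):ℂ))) τ :=
        ContinuousAt.comp (x := τ) (g := fun p : ℂ × ℂ => ccwArc p.1 p.2)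
          (ccwArc_continuousAt (abs_S1 _) (abs_S1 _) hτ.1) hpair1
      have hpair2 : ContinuousAt (fun τ : Fin 4 → S1 => (((τ j : ℂ)), ((x : ℂ)))) τ :=
        (hc2.prodMk continuous_const).continuousAt
      have hA2 : ContinuousAt (fun τ : Fin 4 → S1 => ccwArc ((τ j:ℂ)) ((x:ℂ))) τ :=
        ContinuousAt.comp (x := τ) (g := fun p : ℂ × ℂ => ccwArc p.1 p.2)
          (ccwArc_continuousAt (abs_S1 _) (abs_S1 _) hτ.2) hpair2
      exact hA1.sub hA2
    have hO : IsOpen (V ∩ (fun τ : Fin 4 → S1 =>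
        arcL τ j - ccwArc ((τ j : ℂ)) ((x:ℂ))) ⁻¹' Set.Ioi 0) :=
      hf.isOpen_inter_preimage hVopen isOpen_Ioi
    have hσV : σ ∈ V :=
      ⟨vertex_ne hσcc j, fun h => hx σ hσA j (Subtype.ext h.symm)⟩
    have hσO : σ ∈ V ∩ (fun τ : Fin 4 → S1 =>
        arcL τ j - ccwArc ((τ j : ℂ)) ((x:ℂ))) ⁻¹' Set.Ioi 0 :=
      ⟨hσV, by
        have h9 : (0:ℝ) < arcL σ j - ccwArc ((σ j : ℂ)) ((x:ℂ)) := by linarith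
        exact h9⟩
    have hev : ∀ᶠ τ in nhds σ, τ ∈ V ∩ (fun τ : Fin 4 → S1 =>
        arcL τ j - ccwArc ((τ j : ℂ)) ((x:ℂ))) ⁻¹' Set.Ioi 0 := hO.mem_nhds hσO
    rw [ContinuousWithinAt, nhds_discrete, Filter.tendsto_pure]
    filter_upwards [nhdsWithin_le_nhds hev, self_mem_nhdsWithin] with τ hτO hτA
    have h1 : ccwArc ((τ j : ℂ)) ((x:ℂ)) < arcL τ j := by
      have := hτO.2; simp only [Set.mem_preimage, Set.mem_Ioi] at this; linarith
    exact Gx_eq (hA τ hτA) (hx τ hτA) h1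
  have hsub : (Gx x '' A).Subsingleton :=
    (hconn.isPreconnected.image _ hcont).subsingleton
  intro σ hσ τ hτ
  exact hsub ⟨σ, hσ, rfl⟩ ⟨τ, hτ, rfl⟩

lemma two_in_arc {σ : Fin 4 → S1} {x y : S1} (hxy : x ≠ y) {j : Fin 4}
    (hxs : (x:ℂ) ≠ (σ j : ℂ)) (hys : (y:ℂ) ≠ (σ j : ℂ))
    (hxj : ccwArc ((σ j : ℂ)) ((x:ℂ)) < arcL σ j)
    (hyj : ccwArc ((σ j : ℂ)) ((y:ℂ)) < arcL σ j) :
    min (ccwArc ((x:ℂ)) ((y:ℂ))) (ccwArc ((y:ℂ)) ((x:ℂ))) < arcL σ j := by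
  set p := ccwArc ((σ j:ℂ)) ((x:ℂ)) with hpdef
  set q := ccwArc ((σ j:ℂ)) ((y:ℂ)) with hqdef
  have hσ0 : (σ j : ℂ) ≠ 0 := by
    intro h0; have := abs_S1 (σ j); rw [h0] at this; simp at this
  have hp0 : 0 < p := ccwArc_pos (abs_S1 _) (abs_S1 _) hxs
  have hq0 : 0 < q := ccwArc_pos (abs_S1 _) (abs_S1 _) hys
  have hp2 : p < 2 * Real.pi := ccwArc_lt_two_pi
  have hq2 : q < 2 * Real.pi := ccwArc_lt_two_pi
  have hrepx : (x:ℂ) = (σ j:ℂ) * Complex.exp ((p:ℝ) * Complex.I) := by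
    have h1 := exp_ccwArc (abs_S1 (σ j)) (abs_S1 x)
    rw [← hpdef] at h1; rw [h1]; field_simp
  have hrepy : (y:ℂ) = (σ j:ℂ) * Complex.exp ((q:ℝ) * Complex.I) := by
    have h1 := exp_ccwArc (abs_S1 (σ j)) (abs_S1 y)
    rw [← hqdef] at h1; rw [h1]; field_simp
  have hpq : p ≠ q := by
    intro h; apply hxy; apply Subtype.ext; rw [hrepx, hrepy, h]
  rcases lt_or_gt_of_ne hpq with h | h
  · have hval : ccwArc ((x:ℂ)) ((y:ℂ)) = q - p := by
      apply ccwArc_of_rep (abs_S1 _) (by linarith) (by linarith)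
      rw [hrepx, hrepy, mul_assoc, rep_mul]
      norm_num
    calc min (ccwArc ((x:ℂ)) ((y:ℂ))) (ccwArc ((y:ℂ)) ((x:ℂ)))
        ≤ ccwArc ((x:ℂ)) ((y:ℂ)) := min_le_left _ _
      _ = q - p := hval
      _ < arcL σ j := by linarith
  · have hval : ccwArc ((y:ℂ)) ((x:ℂ)) = p - q := by
      apply ccwArc_of_rep (abs_S1 _) (by linarith) (by linarith)
      rw [hrepx, hrepy, mul_assoc, rep_mul]
      norm_num
    calc min (ccwArc ((x:ℂ)) ((y:ℂ))) (ccwArc ((y:ℂ)) ((x:ℂ)))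
        ≤ ccwArc ((y:ℂ)) ((x:ℂ)) := min_le_right _ _
      _ = p - q := hval
      _ < arcL σ j := by linarith

lemma ne_zero_S1 (z : S1) : (z : ℂ) ≠ 0 := by
  intro h0; have := abs_S1 z; rw [h0] at this; simp at this

lemma dist_to_vertex {σ : Fin 4 → S1} {u : S1} {j : Fin 4}
    (hus : (u:ℂ) ≠ (σ j : ℂ)) :
    dist ((u:ℂ)) ((σ j : ℂ)) ≤ ccwArc ((σ j : ℂ)) ((u:ℂ)) := by
  set p := ccwArc ((σ j:ℂ)) ((u:ℂ)) with hp
  have hp0 : 0 < p := ccwArc_pos (abs_S1 _) (abs_S1 _) hus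
  have hp2 : p < 2 * Real.pi := ccwArc_lt_two_pi
  have h1 := exp_ccwArc (abs_S1 (σ j)) (abs_S1 u)
  rw [← hp] at h1
  have hdiff : (u:ℂ) - (σ j:ℂ) = (σ j:ℂ) * (Complex.exp ((p:ℝ) * Complex.I) - 1) := by
    rw [h1]; field_simp [ne_zero_S1 (σ j)]
  rw [Complex.dist_eq, hdiff, norm_mul, abs_S1, one_mul]
  exact chord_le_arc (le_of_lt hp0) (le_of_lt hp2)

lemma arc_le_diam {σ : Fin 4 → S1} (hσ : CCW4 σ) {j : Fin 4} (hlt : arcL σ j ≤ Real.pi) :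
    arcL σ j ≤ Real.pi / 2 * Metric.diam (Set.range (fun k => (σ k : ℂ))) := by
  have hpos := (arc_facts hσ).1 j
  have h1 : Complex.exp ((arcL σ j : ℝ) * Complex.I) = (σ (j+1) : ℂ) / (σ j : ℂ) :=
    exp_ccwArc (abs_S1 (σ j)) (abs_S1 (σ (j+1)))
  have hdiff : (σ (j+1):ℂ) - (σ j:ℂ)
      = (σ j:ℂ) * (Complex.exp ((arcL σ j : ℝ) * Complex.I) - 1) := by
    rw [h1]; field_simp [ne_zero_S1 (σ j)]
  have hchord : ‖(σ (j+1):ℂ) - (σ j:ℂ)‖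
      = ‖Complex.exp ((arcL σ j : ℝ) * Complex.I) - 1‖ := by
    rw [hdiff, norm_mul, abs_S1, one_mul]
  have h2 := arc_le_chord (le_of_lt hpos) hlt
  have hbd : Bornology.IsBounded (Set.range (fun k => (σ k : ℂ))) :=
    (Set.finite_range _).isBounded
  have hd : dist ((σ (j+1):ℂ)) ((σ j:ℂ)) ≤ Metric.diam (Set.range (fun k => (σ k : ℂ))) :=
    Metric.dist_le_diam_of_mem hbd ⟨j+1, rfl⟩ ⟨j, rfl⟩
  rw [Complex.dist_eq, hchord] at hd
  have hπ := pi_pos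
  nlinarith

end Ext

theorem extension (A : Set (Fin 4 → S1)) (hA : ∀ σ ∈ A, CCW4 σ)
    (hconn : IsConnected A) (hsurj : Lam '' A = Set.Ioi 0) :
    (∃ F : Finset S1, F.card ≤ 4 ∧
      {x : S1 | ∀ σ ∈ A, ∀ k, σ k ≠ x} ⊆ ↑F) ∧
    ((∀ ε > (0:ℝ), ∃ σ ∈ A, Metric.diam (Set.range (fun k => (σ k : ℂ))) < ε) →
      ∃ F : Finset S1, F.card ≤ 2 ∧
        {x : S1 | ∀ σ ∈ A, ∀ k, σ k ≠ x} ⊆ ↑F) := by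
  classical
  obtain ⟨σ₀, hσ₀⟩ := hconn.nonempty
  have hπ := Ext.pi_pos
  set M := {x : S1 | ∀ σ ∈ A, ∀ k, σ k ≠ x} with hMdef
  set J : S1 → Fin 4 := fun x => Ext.Gx x σ₀ with hJdef
  have key : ∀ x ∈ M, ∀ σ ∈ A, ccwArc ((σ (J x) : ℂ)) ((x:ℂ)) < Ext.arcL σ (J x) := by
    intro x hxM σ hσ
    have h1 := Ext.Gx_spec (hA σ hσ) (fun k => hxM σ hσ k)
    have h2 := Ext.Gx_const hA hconn (fun σ' hσ' k => hxM σ' hσ' k) σ hσ σ₀ hσ₀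
    rw [h2] at h1
    exact h1
  have hInj : Set.InjOn J M := by
    intro x hxM y hyM hJxy
    by_contra hne
    have hneC : (y:ℂ) ≠ (x:ℂ) := fun h => hne (Subtype.ext h.symm)
    have hneC' : (x:ℂ) ≠ (y:ℂ) := fun h => hne (Subtype.ext h)
    set j := J x with hjd
    set cm := min (ccwArc ((x:ℂ)) ((y:ℂ))) (ccwArc ((y:ℂ)) ((x:ℂ))) with hcm
    have hc0 : 0 < cm := lt_min (Ext.ccwArc_pos (Ext.abs_S1 _) (Ext.abs_S1 _) hneC)
      (Ext.ccwArc_pos (Ext.abs_S1 _) (Ext.abs_S1 _) hneC')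
    have hbig : ∀ σ ∈ A, cm < Ext.arcL σ j := by
      intro σ hσ
      have hky := key y hyM σ hσ
      rw [← hJxy] at hky
      exact Ext.two_in_arc hne (fun h => hxM σ hσ j (Subtype.ext h.symm))
        (fun h => hyM σ hσ j (Subtype.ext h.symm)) (key x hxM σ hσ) hky
    have case02 : j = 0 ∨ j = 2 → False := by
      intro hj02
      have hv : cm / (4*Real.pi) ∈ Lam '' A := by
        rw [hsurj]; exact Set.mem_Ioi.mpr (by positivity)
      obtain ⟨σ, hσA, hLam⟩ := hv
      obtain ⟨hpos, hlt2, hsum⟩ := Ext.arc_facts (hA σ hσA)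
      have hb := hbig σ hσA
      have hnum : cm < Ext.arcL σ 0 + Ext.arcL σ 2 := by
        rcases hj02 with h | h <;> rw [h] at hb <;> linarith [hpos 0, hpos 2]
      have hden0 : 0 < Ext.arcL σ 1 + Ext.arcL σ 3 := by linarith [hpos 1, hpos 3]
      have hden2 : Ext.arcL σ 1 + Ext.arcL σ 3 < 2 * Real.pi := by
        linarith [hpos 0, hpos 2]
      have hLamEq : Lam σ = (Ext.arcL σ 0 + Ext.arcL σ 2) / (Ext.arcL σ 1 + Ext.arcL σ 3) := rfl
      rw [hLamEq] at hLam
      rw [div_eq_div_iff hden0.ne' (by positivity : (0:ℝ) < 4*Real.pi).ne'] at hLam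
      nlinarith [mul_lt_mul_of_pos_right hnum hden0,
        mul_lt_mul_of_pos_left hden2 (lt_trans hc0 hnum)]
    have case13 : j = 1 ∨ j = 3 → False := by
      intro hj13
      have hv : 2*Real.pi/cm + 1 ∈ Lam '' A := by
        rw [hsurj]; exact Set.mem_Ioi.mpr (by positivity)
      obtain ⟨σ, hσA, hLam⟩ := hv
      obtain ⟨hpos, hlt2, hsum⟩ := Ext.arc_facts (hA σ hσA)
      have hb := hbig σ hσA
      have hden : cm < Ext.arcL σ 1 + Ext.arcL σ 3 := by
        rcases hj13 with h | h <;> rw [h] at hb <;> linarith [hpos 1, hpos 3]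
      have hnum2 : Ext.arcL σ 0 + Ext.arcL σ 2 < 2 * Real.pi := by
        linarith [hpos 1, hpos 3]
      have hnum0 : 0 < Ext.arcL σ 0 + Ext.arcL σ 2 := by linarith [hpos 0, hpos 2]
      have hLamEq : Lam σ = (Ext.arcL σ 0 + Ext.arcL σ 2) / (Ext.arcL σ 1 + Ext.arcL σ 3) := rfl
      have hlt : Lam σ < 2*Real.pi/cm := by
        rw [hLamEq, div_lt_div_iff₀ (by linarith) hc0]
        nlinarith [mul_lt_mul_of_pos_left hden (by linarith : (0:ℝ) < 2*Real.pi)]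
      rw [hLam] at hlt
      have hq : 0 < (2:ℝ)*Real.pi/cm := by positivity
      linarith
    rcases Ext.fin4 j with h | h | h | h
    · exact case02 (Or.inl h)
    · exact case13 (Or.inl h)
    · exact case02 (Or.inr h)
    · exact case13 (Or.inr h)
  have hMfin : M.Finite := Set.Finite.of_finite_image (Set.toFinite _) hInj
  have hcard4 : hMfin.toFinset.card ≤ 4 := by
    have h := Finset.card_le_card_of_injOn J (fun a _ => Finset.mem_univ (J a))
      (by rw [hMfin.coe_toFinset]; exact hInj)
    simpa using h
  have hsubM : M ⊆ ↑hMfin.toFinset := fun a ha => hMfin.mem_toFinset.mpr ha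
  refine ⟨⟨hMfin.toFinset, hcard4, hsubM⟩, ?_⟩
  intro hsmall
  refine ⟨hMfin.toFinset, ?_, hsubM⟩
  by_contra hcard
  push_neg at hcard
  have h1 : 0 < hMfin.toFinset.card := by omega
  obtain ⟨x, hxF⟩ := Finset.card_pos.mp h1
  have h2 : 0 < (hMfin.toFinset.erase x).card := by
    rw [Finset.card_erase_of_mem hxF]; omega
  obtain ⟨y, hyF⟩ := Finset.card_pos.mp h2
  have h3 : 0 < ((hMfin.toFinset.erase x).erase y).card := by
    rw [Finset.card_erase_of_mem hyF, Finset.card_erase_of_mem hxF]; omega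
  obtain ⟨z, hzF⟩ := Finset.card_pos.mp h3
  obtain ⟨hzy, hzF'⟩ := Finset.mem_erase.mp hzF
  obtain ⟨hzx, hzF''⟩ := Finset.mem_erase.mp hzF'
  obtain ⟨hyx, hyF'⟩ := Finset.mem_erase.mp hyF
  have hxM : x ∈ M := hMfin.mem_toFinset.mp hxF
  have hyM : y ∈ M := hMfin.mem_toFinset.mp hyF'
  have hzM : z ∈ M := hMfin.mem_toFinset.mp hzF''
  have hxyC : (x:ℂ) ≠ (y:ℂ) := fun h => hyx (Subtype.ext h.symm)
  have hxzC : (x:ℂ) ≠ (z:ℂ) := fun h => hzx (Subtype.ext h.symm)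
  have hyzC : (y:ℂ) ≠ (z:ℂ) := fun h => hzy (Subtype.ext h.symm)
  set δ := min (min (dist ((x:ℂ)) ((y:ℂ))) (dist ((x:ℂ)) ((z:ℂ)))) (dist ((y:ℂ)) ((z:ℂ)))
    with hδdef
  have hδ0 : 0 < δ := lt_min (lt_min (dist_pos.mpr hxyC) (dist_pos.mpr hxzC))
    (dist_pos.mpr hyzC)
  obtain ⟨σ, hσA, hdiam⟩ := hsmall (δ/(2*(Real.pi+1))) (by positivity)
  obtain ⟨hpos, hlt2, hsum⟩ := Ext.arc_facts (hA σ hσA)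
  have hd0 : 0 ≤ Metric.diam (Set.range (fun k => (σ k : ℂ))) := Metric.diam_nonneg
  have pair : ∀ i i' : Fin 4, i ≠ i' → Ext.arcL σ i + Ext.arcL σ i' < 2 * Real.pi := by
    intro i i' hne'
    rcases Ext.fin4 i with rfl | rfl | rfl | rfl <;>
      rcases Ext.fin4 i' with rfl | rfl | rfl | rfl <;>
        first
          | exact absurd rfl hne'
          | linarith [hpos 0, hpos 1, hpos 2, hpos 3]
  have bound : ∀ u v : S1, u ∈ M → v ∈ M → Ext.arcL σ (J u) ≤ Real.pi →
      Ext.arcL σ (J v) ≤ Real.pi → dist ((u:ℂ)) ((v:ℂ)) < δ := by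
    intro u v huM hvM hau hav
    have hu1 : dist ((u:ℂ)) ((σ (J u) : ℂ)) ≤ Ext.arcL σ (J u) :=
      le_of_lt (lt_of_le_of_lt
        (Ext.dist_to_vertex (fun h => huM σ hσA (J u) (Subtype.ext h.symm)))
        (key u huM σ hσA))
    have hv1 : dist ((σ (J v) : ℂ)) ((v:ℂ)) ≤ Ext.arcL σ (J v) := by
      rw [dist_comm]
      exact le_of_lt (lt_of_le_of_lt
        (Ext.dist_to_vertex (fun h => hvM σ hσA (J v) (Subtype.ext h.symm)))
        (key v hvM σ hσA))
    have hu2 := Ext.arc_le_diam (hA σ hσA) hau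
    have hv2 := Ext.arc_le_diam (hA σ hσA) hav
    have hmid : dist ((σ (J u) : ℂ)) ((σ (J v) : ℂ))
        ≤ Metric.diam (Set.range (fun k => (σ k : ℂ))) :=
      Metric.dist_le_diam_of_mem ((Set.finite_range _).isBounded) ⟨J u, rfl⟩ ⟨J v, rfl⟩
    have htri := dist_triangle4 ((u:ℂ)) ((σ (J u) : ℂ)) ((σ (J v) : ℂ)) ((v:ℂ))
    have hscale : Real.pi / 2 * Metric.diam (Set.range (fun k => (σ k : ℂ)))
        ≤ Real.pi / 2 * (δ/(2*(Real.pi+1))) :=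
      mul_le_mul_of_nonneg_left (le_of_lt hdiam) (by positivity)
    have hkey : (Real.pi + 1) * (δ/(2*(Real.pi+1))) = δ/2 := by
      field_simp
    nlinarith [hdiam, hδ0]
  have hJxy : J x ≠ J y := fun h => hyx (hInj hxM hyM h).symm
  have hJxz : J x ≠ J z := fun h => hzx (hInj hxM hzM h).symm
  have hJyz : J y ≠ J z := fun h => hzy (hInj hyM hzM h).symm
  have o1 : Ext.arcL σ (J x) ≤ Real.pi ∨ Ext.arcL σ (J y) ≤ Real.pi := by
    by_contra h; push_neg at h
    have := pair (J x) (J y) hJxy; linarith [h.1, h.2]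
  have o2 : Ext.arcL σ (J x) ≤ Real.pi ∨ Ext.arcL σ (J z) ≤ Real.pi := by
    by_contra h; push_neg at h
    have := pair (J x) (J z) hJxz; linarith [h.1, h.2]
  have o3 : Ext.arcL σ (J y) ≤ Real.pi ∨ Ext.arcL σ (J z) ≤ Real.pi := by
    by_contra h; push_neg at h
    have := pair (J y) (J z) hJyz; linarith [h.1, h.2]
  rcases le_or_gt (Ext.arcL σ (J x)) Real.pi with hx' | hx'
  · rcases o3 with hy' | hz'
    · have hb := bound x y hxM hyM hx' hy'
      have : δ ≤ dist ((x:ℂ)) ((y:ℂ)) := (min_le_left _ _).trans (min_le_left _ _)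
      linarith
    · have hb := bound x z hxM hzM hx' hz'
      have : δ ≤ dist ((x:ℂ)) ((z:ℂ)) := (min_le_left _ _).trans (min_le_right _ _)
      linarith
  · have hy' := o1.resolve_left (not_le.mpr hx')
    have hz' := o2.resolve_left (not_le.mpr hx')
    have hb := bound y z hyM hzM hy' hz'
    have : δ ≤ dist ((y:ℂ)) ((z:ℂ)) := min_le_right _ _
    linarith
end
end

section
/- Let γ be a polygon and let A be a connected component of I(γ) that is homeomorphic to ℝ via a homeomorphism h : ℝ → A, such that the aspect ratio function ρ is locally injective at every point of A with ρ = 1, and such that for some T > 0 either ρ(h(t)) < 1 for all |t| ≥ T, or ρ(h(t)) > 1 for all |t| ≥ T. Then the set of squares in A (members with ρ = 1) is finite and has even cardinality. -/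
open Set Filter

noncomputable section

lemma no_zero_same_sign {g : ℝ → ℝ} (hg : Continuous g) {u v : ℝ} (huv : u ≤ v)
    (hnz : ∀ t ∈ Set.Icc u v, g t ≠ 0) : 0 < g u * g v := by
  have hu := hnz u ⟨le_refl u, huv⟩
  have hv := hnz v ⟨huv, le_refl v⟩
  rcases lt_or_gt_of_ne hu with h1 | h1 <;> rcases lt_or_gt_of_ne hv with h2 | h2
  · nlinarith
  · obtain ⟨c, hc, hc0⟩ := intermediate_value_Icc huv hg.continuousOn
      (show (0:ℝ) ∈ Set.Icc (g u) (g v) from ⟨h1.le, h2.le⟩)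
    exact absurd hc0 (hnz c hc)
  · obtain ⟨c, hc, hc0⟩ := intermediate_value_Icc' huv hg.continuousOn
      (show (0:ℝ) ∈ Set.Icc (g v) (g u) from ⟨h2.le, h1.le⟩)
    exact absurd hc0 (hnz c hc)
  · nlinarith

lemma sign_trans {x y z : ℝ} (h1 : 0 < x * y) (h2 : y * z < 0) : x * z < 0 := by
  rcases mul_pos_iff.mp h1 with ⟨hx, hy⟩ | ⟨hx, hy⟩ <;>
    rcases mul_neg_iff.mp h2 with ⟨h3, h4⟩ | ⟨h3, h4⟩
  · exact mul_neg_of_pos_of_neg hx h4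
  · linarith
  · linarith
  · exact mul_neg_of_neg_of_pos hx h4

lemma parity_lemma (Z : Finset ℝ) : ∀ (g : ℝ → ℝ) (a b : ℝ), Continuous g → a ≤ b →
    g a ≠ 0 → g b ≠ 0 →
    (↑Z ⊆ Set.Icc a b) → (∀ t ∈ Set.Icc a b, (g t = 0 ↔ t ∈ Z)) →
    (∀ t ∈ Z, ∃ ε > (0:ℝ), ∀ u ∈ Set.Ioo (t-ε) t, ∀ v ∈ Set.Ioo t (t+ε), g u * g v < 0) →
    (Even Z.card ↔ 0 < g a * g b) := by
  induction Z using Finset.strongInduction with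
  | _ Z IH =>
  intro g a b hg hab ha hb hZsub hZiff hcross
  rcases Z.eq_empty_or_nonempty with rfl | hne
  · simp only [Finset.card_empty, Even.zero, true_iff]
    exact no_zero_same_sign hg hab (fun t ht h0 => by simpa using (hZiff t ht).mp h0)
  · set t := Z.min' hne with ht_def
    have htZ : t ∈ Z := Z.min'_mem hne
    have htIcc : t ∈ Set.Icc a b := hZsub htZ
    have hgt : g t = 0 := (hZiff t htIcc).mpr htZ
    have hat : a < t := lt_of_le_of_ne htIcc.1 (fun h => ha (h ▸ hgt))
    have htb : t < b := lt_of_le_of_ne htIcc.2 (fun h => hb (h ▸ hgt))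
    obtain ⟨ε, hε, hcr⟩ := hcross t htZ
    -- choose u
    set u := max a (t - ε/2) with hu_def
    have hut : u < t := max_lt hat (by linarith)
    have hau : a ≤ u := le_max_left _ _
    have huIoo : u ∈ Set.Ioo (t - ε) t := ⟨lt_of_lt_of_le (by linarith) (le_max_right _ _), hut⟩
    have hnotinZ : ∀ s ∈ Set.Icc a b, s < t → g s ≠ 0 := by
      intro s hs hst h0
      exact absurd (Z.min'_le s ((hZiff s hs).mp h0)) (not_le.mpr hst)
    have hgu : 0 < g a * g u := by
      apply no_zero_same_sign hg hau
      intro s hs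
      exact hnotinZ s ⟨hs.1, le_trans hs.2 (le_trans hut.le htIcc.2)⟩ (lt_of_le_of_lt hs.2 hut)
    -- choose v : below next zero (or b) and within ε
    set c : ℝ := if hc : (Z.erase t).Nonempty then (Z.erase t).min' hc else b with hc_def
    have htc : t < c := by
      rw [hc_def]
      split_ifs with hc
      · have hmem := (Z.erase t).min'_mem hc
        have := Finset.mem_erase.mp hmem
        exact lt_of_le_of_ne (Z.min'_le _ this.2) (Ne.symm this.1)
      · exact htb
    have hcb : c ≤ b := by
      rw [hc_def]; split_ifs with hc
      · exact (hZsub (Finset.mem_erase.mp ((Z.erase t).min'_mem hc)).2).2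
      · exact le_refl b
    set v := min (t + ε/2) ((t + c)/2) with hv_def
    have htv : t < v := lt_min (by linarith) (by linarith)
    have hvc : v < c := lt_of_le_of_lt (min_le_right _ _) (by linarith)
    have hvb : v ≤ b := le_trans hvc.le hcb
    have hvIoo : v ∈ Set.Ioo t (t + ε) :=
      ⟨htv, lt_of_le_of_lt (min_le_left _ _) (by linarith)⟩
    have hav : a ≤ v := le_trans hat.le htv.le
    have hvZ : v ∉ Z := by
      intro hv
      have hvt : v ≠ t := ne_of_gt htv
      have hv' : v ∈ Z.erase t := Finset.mem_erase.mpr ⟨hvt, hv⟩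
      have hcne : (Z.erase t).Nonempty := ⟨v, hv'⟩
      have hle := (Z.erase t).min'_le v hv'
      rw [hc_def] at hvc
      rw [dif_pos hcne] at hvc
      exact absurd hle (not_le.mpr hvc)
    have hgv : g v ≠ 0 := fun h0 => hvZ ((hZiff v ⟨hav, hvb⟩).mp h0)
    have huv : g u * g v < 0 := hcr u huIoo v hvIoo
    -- apply IH on [v, b] with Z.erase t
    have herase : Z.erase t ⊂ Z := Finset.erase_ssubset htZ
    have hIH := IH (Z.erase t) herase g v b hg hvb hgv hb ?_ ?_ ?_
    · have hcard : Z.card = (Z.erase t).card + 1 := (Finset.card_erase_add_one htZ).symm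
      have hsign : g a * g v < 0 := sign_trans hgu huv
      have hb2 : 0 < g b * g b := mul_self_pos.mpr hb
      have key : (g a * g b) * (g v * g b) < 0 := by nlinarith [hsign, hb2]
      constructor
      · intro hev
        have hodd : ¬ Even (Z.erase t).card := by
          rw [hcard] at hev; simpa [Nat.even_add_one] using hev
        have hvb2 : ¬ (0 < g v * g b) := fun hx => hodd (hIH.mpr hx)
        have hvb3 : g v * g b < 0 :=
          lt_of_le_of_ne (not_lt.mp hvb2) (mul_ne_zero hgv hb)
        nlinarith [key, hvb3]
      · intro hab2
        have hvb3 : g v * g b < 0 := by nlinarith [key, hab2]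
        have hnot : ¬ (0 < g v * g b) := by nlinarith
        have hodd : ¬ Even (Z.erase t).card := fun hx => hnot (hIH.mp hx)
        rw [hcard]; simpa [Nat.even_add_one] using hodd
    · intro s hs
      have hsZ := (Finset.mem_erase.mp hs).2
      have hsIcc := hZsub hsZ
      refine ⟨?_, hsIcc.2⟩
      have : c ≤ s := by
        rw [hc_def, dif_pos ⟨s, hs⟩]
        exact (Z.erase t).min'_le s hs
      linarith
    · intro s hs
      constructor
      · intro h0
        have hsZ : s ∈ Z := (hZiff s ⟨le_trans hav hs.1, hs.2⟩).mp h0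
        exact Finset.mem_erase.mpr ⟨fun h => (not_lt.mpr hs.1 (h ▸ htv)), hsZ⟩
      · intro hs'
        exact (hZiff s ⟨le_trans hav hs.1, hs.2⟩).mpr (Finset.mem_erase.mp hs').2
    · intro s hs
      exact hcross s (Finset.mem_erase.mp hs).2

theorem nonhyperbolic_even_squares (φ : S1 → ℂ) (hφ : IsCCWJordan φ)
    (hpoly : IsPolygon (Set.range φ))
    (A : Set (Fin 4 → ℂ))
    (hcomp : ∃ R ∈ inscribed (Set.range φ),
      A = connectedComponentIn (inscribed (Set.range φ)) R)
    (h : ℝ ≃ₜ A)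
    (hloc : ∀ R ∈ A, aspect R = 1 →
      ∃ U : Set (Fin 4 → ℂ), IsOpen U ∧ R ∈ U ∧ Set.InjOn aspect (U ∩ A))
    (hends : ∃ T > (0:ℝ),
      (∀ t : ℝ, T ≤ |t| → aspect (h t).val < 1) ∨
      (∀ t : ℝ, T ≤ |t| → 1 < aspect (h t).val)) :
    {R ∈ A | aspect R = 1}.Finite ∧ Even {R ∈ A | aspect R = 1}.ncard := by
  have hA_sub : A ⊆ inscribed (Set.range φ) := by
    obtain ⟨R0, hR0, rfl⟩ := hcomp
    exact connectedComponentIn_subset _ _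
  set ψ : ℝ → (Fin 4 → ℂ) := fun t => (h t).val with hψ_def
  have hψc : Continuous ψ := continuous_subtype_val.comp h.continuous
  have hψA : ∀ t, ψ t ∈ A := fun t => (h t).2
  have hψne : ∀ t, ψ t 1 - ψ t 0 ≠ 0 := fun t =>
    sub_ne_zero.mpr (hA_sub (hψA t)).1.1
  have hψinj : Function.Injective ψ := fun s s' hss =>
    h.injective (Subtype.ext hss)
  set g : ℝ → ℝ := fun t => aspect (ψ t) - 1 with hg_def
  have hg : Continuous g := by
    apply Continuous.sub _ continuous_const
    rw [continuous_iff_continuousAt]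
    intro t
    have h1 : Continuous fun s => ‖ψ s 2 - ψ s 1‖ :=
      continuous_norm.comp (((continuous_apply 2).comp hψc).sub
        ((continuous_apply 1).comp hψc))
    have h2 : Continuous fun s => ‖ψ s 1 - ψ s 0‖ :=
      continuous_norm.comp (((continuous_apply 1).comp hψc).sub
        ((continuous_apply 0).comp hψc))
    exact h1.continuousAt.div h2.continuousAt (by
      simpa using norm_ne_zero_iff.mpr (hψne t))
  -- local injectivity of g near its zeros
  have hinj : ∀ t : ℝ, g t = 0 → ∃ V : Set ℝ, IsOpen V ∧ t ∈ V ∧ Set.InjOn g V := by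
    intro t h0
    have hasp : aspect (ψ t) = 1 := by have := h0; simp only [hg_def] at this; linarith
    obtain ⟨U, hU, hmem, hUinj⟩ := hloc (ψ t) (hψA t) hasp
    refine ⟨ψ ⁻¹' U, hU.preimage hψc, hmem, ?_⟩
    intro s hs s' hs' hgs
    have : aspect (ψ s) = aspect (ψ s') := by simp only [hg_def] at hgs; linarith
    exact hψinj (hUinj ⟨hs, hψA s⟩ ⟨hs', hψA s'⟩ this)
  -- crossing property at zeros
  have hcross : ∀ t : ℝ, g t = 0 →
      ∃ ε > (0:ℝ), ∀ u ∈ Set.Ioo (t-ε) t, ∀ v ∈ Set.Ioo t (t+ε), g u * g v < 0 := by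
    intro t h0
    obtain ⟨V, hV, htV, hVinj⟩ := hinj t h0
    obtain ⟨r, hr, hball⟩ := Metric.isOpen_iff.mp hV t htV
    refine ⟨r/2, by linarith, ?_⟩
    have hIcc : Set.Icc (t - r/2) (t + r/2) ⊆ V := fun s hs => hball (by
      rw [Metric.mem_ball, Real.dist_eq]
      rw [abs_lt]; constructor <;> [linarith [hs.1]; linarith [hs.2]])
    have hle : t - r/2 ≤ t + r/2 := by linarith
    have hmono := ContinuousOn.strictMonoOn_of_injOn_Icc' hle
      (hg.continuousOn) (hVinj.mono hIcc)
    intro u hu v hv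
    have huI : u ∈ Set.Icc (t - r/2) (t + r/2) := ⟨hu.1.le, by linarith [hu.2]⟩
    have hvI : v ∈ Set.Icc (t - r/2) (t + r/2) := ⟨by linarith [hv.1], hv.2.le⟩
    have htI : t ∈ Set.Icc (t - r/2) (t + r/2) := ⟨by linarith, by linarith⟩
    rcases hmono with hm | hm
    · have h1 := hm huI htI hu.2
      have h2 := hm htI hvI hv.1
      rw [h0] at h1 h2
      exact mul_neg_of_neg_of_pos h1 h2
    · have h1 := hm huI htI hu.2
      have h2 := hm htI hvI hv.1
      rw [h0] at h1 h2
      exact mul_neg_of_pos_of_neg h1 h2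
  obtain ⟨T, hT, hcase⟩ := hends
  have habs : ∀ t : ℝ, T ≤ |t| → g t ≠ 0 ∧ (0 < g t ↔ 1 < aspect (ψ t)) := by
    intro t ht
    rcases hcase with hc | hc
    · have := hc t ht; constructor
      · simp only [hg_def]; intro hx; nlinarith
      · simp only [hg_def]; constructor <;> intro <;> linarith
    · have := hc t ht; constructor
      · simp only [hg_def]; intro hx; nlinarith
      · simp only [hg_def]; constructor <;> intro <;> linarith
  have hTabs : T ≤ |(-T : ℝ)| := by rw [abs_neg, abs_of_pos hT]
  have hTabs' : T ≤ |(T : ℝ)| := by rw [abs_of_pos hT]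
  have hga : g (-T) ≠ 0 := (habs (-T) hTabs).1
  have hgb : g T ≠ 0 := (habs T hTabs').1
  have hsame : 0 < g (-T) * g T := by
    rcases hcase with hc | hc
    · have h1 := hc (-T) hTabs; have h2 := hc T hTabs'
      simp only [hg_def]; nlinarith
    · have h1 := hc (-T) hTabs; have h2 := hc T hTabs'
      simp only [hg_def]; nlinarith
  set Zs : Set ℝ := {t | g t = 0} with hZs_def
  have hZsub : Zs ⊆ Set.Icc (-T) T := by
    intro t ht
    by_contra hcon
    simp only [Set.mem_Icc, not_and_or, not_le] at hcon
    have : T ≤ |t| := by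
      rcases hcon with hc | hc
      · rw [le_abs]; right; linarith
      · rw [le_abs]; left; exact hc.le
    exact (habs t this).1 ht
  have hZclosed : IsClosed Zs := isClosed_eq hg continuous_const
  have hZcpt : IsCompact Zs := (isCompact_Icc).of_isClosed_subset hZclosed hZsub
  have hZdisc : DiscreteTopology Zs := by
    rw [discreteTopology_subtype_iff]
    intro t ht
    obtain ⟨V, hV, htV, hVinj⟩ := hinj t ht
    rw [Filter.inf_principal_eq_bot]
    have h1 : V ∈ nhdsWithin t {t}ᶜ := mem_nhdsWithin_of_mem_nhds (hV.mem_nhds htV)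
    have h2 : ({t}ᶜ : Set ℝ) ∈ nhdsWithin t {t}ᶜ := self_mem_nhdsWithin
    refine Filter.mem_of_superset (Filter.inter_mem h1 h2) ?_
    rintro s ⟨hsV, hst⟩ hsZ
    exact hst (hVinj hsV htV (by rw [hsZ, ht]))
  have hZfin : Zs.Finite := hZcpt.finite ⟨hZdisc⟩
  set Z : Finset ℝ := hZfin.toFinset with hZ_def
  have hZcoe : (↑Z : Set ℝ) = Zs := hZfin.coe_toFinset
  have heven : Even Z.card := by
    rw [parity_lemma Z g (-T) T hg (by linarith) hga hgb
      (by rw [hZcoe]; exact hZsub)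
      (fun t _ => ⟨fun h0 => hZfin.mem_toFinset.mpr h0, fun hm => hZfin.mem_toFinset.mp hm⟩)
      (fun t htZ => hcross t (by have := hZfin.mem_toFinset.mp htZ; exact this))]
    exact hsame
  have hSeq : {R ∈ A | aspect R = 1} = ψ '' Zs := by
    ext R
    constructor
    · rintro ⟨hRA, hasp⟩
      refine ⟨h.symm ⟨R, hRA⟩, ?_, ?_⟩
      · show g _ = 0
        simp only [hg_def, hψ_def, Homeomorph.apply_symm_apply]
        rw [hasp]; ring
      · simp only [hψ_def, Homeomorph.apply_symm_apply]
    · rintro ⟨t, ht, rfl⟩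
      refine ⟨hψA t, ?_⟩
      have : g t = 0 := ht
      simp only [hg_def] at this; linarith
  constructor
  · rw [hSeq]; exact hZfin.image ψ
  · rw [hSeq, Set.ncard_image_of_injective Zs hψinj, ← hZcoe, Set.ncard_coe_finset]
    exact heven
end
end

section
/- Let γ be a polygon and let ζ be a connected component of I(γ) that is homeomorphic to a circle, satisfies ψ(ζ) = ζ (ζ is an elliptic component), and on which the aspect ratio function ρ is locally injective at every point with ρ = 1. Then the set of squares in ζ (members with ρ = 1) is finite and its cardinality equals 4k for some odd integer k. -/
open Set Filter

noncomputable section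

namespace E4K

lemma two_pi_pos : (0:ℝ) < 2 * Real.pi := by positivity

lemma expMap_continuous : Continuous expMap := by
  apply Continuous.subtype_mk
  exact Complex.continuous_exp.comp (by continuity)

lemma expMap_coe (t : ℝ) : (expMap t : ℂ) = Complex.exp (t * Complex.I) := rfl

lemma expMap_eq_iff {s t : ℝ} :
    expMap s = expMap t ↔ ∃ m : ℤ, s = t + 2 * Real.pi * m := by
  rw [Subtype.ext_iff, expMap_coe, expMap_coe, Complex.exp_eq_exp_iff_exists_int]
  constructor
  · rintro ⟨m, hm⟩
    refine ⟨m, ?_⟩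
    have : ((s : ℂ)) = ((t + 2 * Real.pi * m : ℝ) : ℂ) := by
      have hI : (Complex.I : ℂ) ≠ 0 := Complex.I_ne_zero
      field_simp at hm ⊢
      push_cast
      have := mul_right_cancel₀ hI (by linear_combination Complex.I * hm : (s:ℂ) * Complex.I = (t + 2 * Real.pi * m) * Complex.I)
      linear_combination this
    exact_mod_cast congrArg Complex.re this
  · rintro ⟨m, hm⟩
    refine ⟨m, ?_⟩
    rw [hm]
    push_cast
    ring

lemma expMap_add_two_pi (t : ℝ) : expMap (t + 2 * Real.pi) = expMap t := by
  rw [expMap_eq_iff]; exact ⟨1, by push_cast; ring⟩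

lemma expMap_add_int_two_pi (t : ℝ) (m : ℤ) : expMap (t + 2 * Real.pi * m) = expMap t := by
  rw [expMap_eq_iff]; exact ⟨m, rfl⟩

lemma expMap_inj_window {c s t : ℝ} (hs : s ∈ Ico c (c + 2 * Real.pi))
    (ht : t ∈ Ico c (c + 2 * Real.pi)) (h : expMap s = expMap t) : s = t := by
  rcases expMap_eq_iff.1 h with ⟨m, hm⟩
  have hpi := Real.pi_pos
  have hm0 : m = 0 := by
    by_contra hne
    have h1 : (1 : ℝ) ≤ |(m : ℝ)| := by
      have := Int.one_le_abs hne
      calc (1:ℝ) ≤ (|m| : ℤ) := by exact_mod_cast this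
      _ = |(m:ℝ)| := by push_cast; rfl
    have h2 : |s - t| < 2 * Real.pi := by
      rw [abs_sub_lt_iff]
      exact ⟨by linarith [hs.1, hs.2, ht.1, ht.2], by linarith [hs.1, hs.2, ht.1, ht.2]⟩
    have h3 : s - t = 2 * Real.pi * m := by linarith
    rw [h3, abs_mul, abs_of_pos two_pi_pos] at h2
    nlinarith
  simp [hm0] at hm; linarith

lemma expMap_surj_window (c : ℝ) (x : S1) :
    ∃ t ∈ Ico c (c + 2 * Real.pi), expMap t = x := by
  have hpi := Real.pi_pos
  have hx : ‖(x : ℂ)‖ = 1 := by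
    have := x.2
    simpa [Complex.dist_eq] using this
  have hxe : Complex.exp ((Complex.arg (x:ℂ) : ℝ) * Complex.I) = (x : ℂ) := by
    have := Complex.norm_mul_exp_arg_mul_I (x : ℂ)
    rw [hx] at this; simpa using this
  set a := Complex.arg (x : ℂ)
  set m : ℤ := ⌈(c - a) / (2 * Real.pi)⌉ with hmdef
  refine ⟨a + 2 * Real.pi * m, ⟨?_, ?_⟩, ?_⟩
  · have h1 := Int.le_ceil ((c - a) / (2 * Real.pi))
    rw [← hmdef] at h1
    have := (div_le_iff₀ two_pi_pos).1 h1
    linarith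
  · have h1 := Int.ceil_lt_add_one ((c - a) / (2 * Real.pi))
    rw [← hmdef] at h1
    have h2 : (m : ℝ) * (2 * Real.pi) < ((c - a) / (2 * Real.pi) + 1) * (2 * Real.pi) :=
      mul_lt_mul_of_pos_right h1 two_pi_pos
    have h3 : (c - a) / (2 * Real.pi) * (2 * Real.pi) = c - a := by field_simp
    nlinarith
  · rw [expMap_add_int_two_pi]
    exact Subtype.ext hxe


lemma ediv_emod_spec {n : ℕ} (hn : 0 < n) (q r' : ℤ) (h0 : 0 ≤ r') (h1 : r' < n) :
    ((r' + q * n) / n = q) ∧ ((r' + q * n) % n = r') := by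
  have hne : (n : ℤ) ≠ 0 := by exact_mod_cast hn.ne'
  constructor
  · rw [Int.add_mul_ediv_right _ _ hne, Int.ediv_eq_zero_of_lt h0 h1, zero_add]
  · rw [Int.add_mul_emod_self_right, Int.emod_eq_of_lt h0 h1]

lemma exists_enum (B : Set ℝ) (hper : ∀ t, t + 2 * Real.pi ∈ B ↔ t ∈ B)
    (hfin : (B ∩ Ico 0 (2 * Real.pi)).Finite)
    (hne : (B ∩ Ico 0 (2 * Real.pi)).Nonempty) :
    ∃ (n : ℕ) (θ : ℤ → ℝ), 0 < n ∧ (B ∩ Ico 0 (2 * Real.pi)).ncard = n ∧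
      StrictMono θ ∧ (∀ i, θ (i + n) = θ i + 2 * Real.pi) ∧ range θ = B := by
  have hperZ : ∀ (q : ℤ) (t : ℝ), t + 2 * Real.pi * q ∈ B ↔ t ∈ B := by
    intro q
    induction q using Int.induction_on with
    | zero => simp
    | succ k ih =>
        intro t
        have ih' := ih t
        push_cast at ih' ⊢
        rw [show t + 2 * Real.pi * ((k : ℝ) + 1) = (t + 2 * Real.pi * (k:ℝ)) + 2 * Real.pi by ring,
          hper, ih']
    | pred k ih =>
        intro t
        have ih' := ih (t - 2 * Real.pi)
        push_cast at ih' ⊢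
        rw [show t + 2 * Real.pi * (-(k : ℝ) - 1) = (t - 2 * Real.pi) + 2 * Real.pi * (-(k:ℝ)) by ring,
          ih']
        have h2 := hper (t - 2 * Real.pi)
        rw [show t - 2*Real.pi + 2*Real.pi = t by ring] at h2
        exact h2.symm
  classical
  set s : Finset ℝ := hfin.toFinset with hs
  set n := s.card with hn
  have hmem : ∀ x, x ∈ s ↔ x ∈ B ∩ Ico 0 (2 * Real.pi) := by
    intro x; simp [hs, Set.Finite.mem_toFinset]
  have hnpos : 0 < n := by
    rcases hne with ⟨x, hx⟩
    exact Finset.card_pos.2 ⟨x, (hmem x).2 hx⟩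
  set ξ : Fin n ↪o ℝ := s.orderEmbOfFin rfl with hξ
  have hξmem : ∀ k, ξ k ∈ B ∩ Ico 0 (2 * Real.pi) := by
    intro k; exact (hmem _).1 (Finset.orderEmbOfFin_mem s rfl k)
  have hnz : (n : ℤ) ≠ 0 := by exact_mod_cast hnpos.ne'
  have hidx : ∀ i : ℤ, (i % n).toNat < n := by
    intro i
    have h0 : 0 ≤ i % n := Int.emod_nonneg i hnz
    have h1 : i % n < n := Int.emod_lt_of_pos i (by exact_mod_cast hnpos)
    omega
  set θ : ℤ → ℝ := fun i => ξ ⟨(i % n).toNat, hidx i⟩ + 2 * Real.pi * ((i / (n:ℤ) : ℤ) : ℝ) with hθ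
  have key : ∀ (q : ℤ) (r' : ℤ) (h0 : 0 ≤ r') (h1 : r' < n),
      θ (r' + q * n) = ξ ⟨r'.toNat, by omega⟩ + 2 * Real.pi * q := by
    intro q r' h0 h1
    have hspec := ediv_emod_spec hnpos q r' h0 h1
    simp only [hθ, hspec.1, hspec.2]
  have hiexp : ∀ i : ℤ, i = (i % (n:ℤ)) + (i / (n:ℤ)) * n := by
    intro i; linear_combination -Int.mul_ediv_add_emod i (n:ℤ)
  refine ⟨n, θ, hnpos, ?_, ?_, ?_, ?_⟩
  · rw [Set.ncard_eq_toFinset_card _ hfin]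
  · -- StrictMono
    apply strictMono_int_of_lt_succ
    intro i
    have h0 : 0 ≤ i % n := Int.emod_nonneg i hnz
    have h1 : i % n < n := Int.emod_lt_of_pos i (by exact_mod_cast hnpos)
    have hie := hiexp i
    have e1 := key (i / (n:ℤ)) (i % n) h0 h1
    rw [← hie] at e1
    by_cases hc : i % n + 1 < n
    · have h2 : i + 1 = (i % (n:ℤ) + 1) + (i / (n:ℤ)) * n := by linear_combination hie
      have e2 := key (i / (n:ℤ)) (i % n + 1) (by omega) hc
      rw [← h2] at e2
      rw [e1, e2]
      have hlt : (⟨(i % n).toNat, by omega⟩ : Fin n) < ⟨(i % n + 1).toNat, by omega⟩ := by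
        rw [Fin.lt_def]; simp; omega
      have := ξ.strictMono hlt
      linarith
    · have hrn : i % (n:ℤ) = (n:ℤ) - 1 := by push_neg at hc; linarith
      have h2 : i + 1 = 0 + (i / (n:ℤ) + 1) * n := by linear_combination hie + hrn
      have e2 := key (i / (n:ℤ) + 1) 0 le_rfl (by exact_mod_cast hnpos)
      rw [← h2] at e2
      rw [e1, e2]
      have b1 := (hξmem ⟨(i % (n:ℤ)).toNat, by omega⟩).2
      have b2 := (hξmem ⟨(0:ℤ).toNat, by omega⟩).2
      have hb1 := b1.2
      have hb2 := b2.1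
      have hcast : ((i / (n:ℤ) + 1 : ℤ) : ℝ) = ((i / (n:ℤ) : ℤ) : ℝ) + 1 := by push_cast; ring
      rw [hcast]
      linarith
  · -- periodicity
    intro i
    have h0 : 0 ≤ i % n := Int.emod_nonneg i hnz
    have h1 : i % n < n := Int.emod_lt_of_pos i (by exact_mod_cast hnpos)
    have hie := hiexp i
    have e1 := key (i / (n:ℤ)) (i % n) h0 h1
    rw [← hie] at e1
    have h2 : i + n = (i % (n:ℤ)) + (i / (n:ℤ) + 1) * n := by linear_combination hie
    have e2 := key (i / (n:ℤ) + 1) (i % n) h0 h1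
    rw [← h2] at e2
    rw [e1, e2]
    push_cast
    ring
  · -- range
    apply Set.eq_of_subset_of_subset
    · rintro t ⟨i, rfl⟩
      have := (hξmem ⟨(i % n).toNat, hidx i⟩).1
      exact (hperZ (i / (n:ℤ)) _).2 this
    · intro t ht
      set q := ⌊t / (2 * Real.pi)⌋ with hq
      set r' := t - 2 * Real.pi * q with hr'
      have hb1 : 0 ≤ r' := by
        have h1 := Int.floor_le (t / (2 * Real.pi))
        rw [← hq] at h1
        have h2 := mul_le_mul_of_nonneg_right h1 two_pi_pos.le
        rw [div_mul_cancel₀ _ (ne_of_gt two_pi_pos)] at h2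
        simp only [hr']; linarith
      have hb2 : r' < 2 * Real.pi := by
        have h1 := Int.lt_floor_add_one (t / (2 * Real.pi))
        rw [← hq] at h1
        have h2 := mul_lt_mul_of_pos_right h1 two_pi_pos
        rw [div_mul_cancel₀ _ (ne_of_gt two_pi_pos)] at h2
        simp only [hr']; linarith
      have hrB : r' ∈ B := by
        have heq : r' + 2 * Real.pi * q = t := by simp only [hr']; ring
        exact (hperZ q r').1 (by rw [heq]; exact ht)
      have hrs : r' ∈ s := (hmem r').2 ⟨hrB, hb1, hb2⟩
      have hrng : r' ∈ Set.range ξ := by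
        rw [hξ, Finset.range_orderEmbOfFin]
        exact hrs
      rcases hrng with ⟨k, hk⟩
      refine ⟨(k : ℤ) + q * n, ?_⟩
      have hkey := key q (k : ℤ) (by exact_mod_cast Nat.zero_le _) (by exact_mod_cast k.2)
      rw [hkey]
      have hfin' : (⟨((k : ℤ)).toNat, by omega⟩ : Fin n) = k := by
        apply Fin.ext; simp
      rw [hfin', hk]
      simp only [hr']; ring


section Core

variable {g : S1 → ℝ} {τ : S1 → S1} {n : ℕ} {θ : ℤ → ℝ}

def arc (θ : ℤ → ℝ) (i : ℤ) : Set S1 := expMap '' Ioo (θ i) (θ (i+1))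

def zpt (θ : ℤ → ℝ) (i : ℤ) : S1 := expMap (θ i)

def rel (n : ℕ) (i j : ℤ) : Prop := ∃ m : ℤ, j = i + m * n

lemma rel_refl (i : ℤ) : rel n i i := ⟨0, by ring⟩

lemma rel_symm {i j : ℤ} (h : rel n i j) : rel n j i := by
  obtain ⟨m, rfl⟩ := h; exact ⟨-m, by ring⟩

lemma rel_trans {i j k : ℤ} (h1 : rel n i j) (h2 : rel n j k) : rel n i k := by
  obtain ⟨m1, rfl⟩ := h1; obtain ⟨m2, rfl⟩ := h2; exact ⟨m1 + m2, by ring⟩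

lemma rel_add {i j : ℤ} (c : ℤ) (h : rel n i j) : rel n (i + c) (j + c) := by
  obtain ⟨m, rfl⟩ := h; exact ⟨m, by ring⟩

lemma rel_sub_iff {i j : ℤ} : rel n i j ↔ (n:ℤ) ∣ (j - i) := by
  constructor
  · rintro ⟨m, rfl⟩; exact ⟨m, by ring⟩
  · rintro ⟨m, hm⟩; exact ⟨m, by linarith⟩

section Theta

variable (hmono : StrictMono θ) (hper : ∀ i, θ (i + n) = θ i + 2 * Real.pi)

include hper in
lemma theta_shift : ∀ (m : ℤ) (i : ℤ), θ (i + m * n) = θ i + 2 * Real.pi * m := by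
  intro m
  induction m using Int.induction_on with
  | zero => intro i; simp
  | succ k ih =>
      intro i
      have h1 : i + ((k : ℤ) + 1) * n = (i + k * n) + n := by ring
      rw [h1, hper, ih]
      push_cast; ring
  | pred k ih =>
      intro i
      have h1 : i + (-(k : ℤ) - 1) * n + n = i + (-(k:ℤ)) * n := by ring
      have := hper (i + (-(k : ℤ) - 1) * n)
      rw [h1, ih] at this
      push_cast at this ⊢
      linarith

include hmono hper in
lemma zpt_rel {i j : ℤ} (h : rel n i j) : zpt θ j = zpt θ i := by
  obtain ⟨m, rfl⟩ := h
  unfold zpt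
  rw [theta_shift hper m i, expMap_add_int_two_pi]

include hmono hper in
lemma arc_rel {i j : ℤ} (h : rel n i j) : arc θ j = arc θ i := by
  obtain ⟨m, rfl⟩ := h
  unfold arc
  have h1 : θ (i + m * n) = θ i + 2 * Real.pi * m := theta_shift hper m i
  have h2 : θ (i + m * n + 1) = θ (i + 1) + 2 * Real.pi * m := by
    rw [show i + m * n + 1 = (i + 1) + m * n by ring, theta_shift hper m (i+1)]
  rw [h1, h2]
  ext x
  constructor
  · rintro ⟨s, ⟨hs1, hs2⟩, rfl⟩
    refine ⟨s - 2 * Real.pi * m, ⟨by linarith, by linarith⟩, ?_⟩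
    have hh := expMap_add_int_two_pi (s - 2*Real.pi*m) m
    rw [show s - 2*Real.pi*m + 2*Real.pi*m = s by ring] at hh
    exact hh.symm ▸ rfl
  · rintro ⟨s, ⟨hs1, hs2⟩, rfl⟩
    exact ⟨s + 2 * Real.pi * m, ⟨by linarith, by linarith⟩, expMap_add_int_two_pi s m⟩

include hmono hper in
lemma zpt_inj {i j : ℤ} (h : zpt θ i = zpt θ j) : rel n i j := by
  rcases expMap_eq_iff.1 h with ⟨m, hm⟩
  have : θ j + 2 * Real.pi * m = θ (j + m * n) := (theta_shift hper m j).symm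
  rw [this] at hm
  have h2 := hmono.injective hm
  exact ⟨-m, by linear_combination -h2⟩

include hmono hper in
lemma arc_inter_rel {i j : ℤ} (h : (arc θ i ∩ arc θ j).Nonempty) : rel n i j := by
  obtain ⟨x, ⟨s, hs, hsx⟩, ⟨t, ht, htx⟩⟩ := h
  rw [← htx] at hsx
  rcases expMap_eq_iff.1 hsx with ⟨m, hm⟩
  have hts : s = t + 2 * Real.pi * m := hm
  have h1 : θ (j + m * n) = θ j + 2 * Real.pi * m := theta_shift hper m j
  have h2 : θ (j + m * n + 1) = θ (j + 1) + 2 * Real.pi * m := by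
    rw [show j + m * n + 1 = (j + 1) + m * n by ring, theta_shift hper m (j+1)]
  -- s ∈ Ioo (θ (j+m*n)) (θ (j+m*n+1)) and s ∈ Ioo (θ i) (θ (i+1))
  have hs2 : θ (j + m * n) < s ∧ s < θ (j + m * n + 1) := by
    rw [h1, h2]; constructor <;> [linarith [ht.1]; linarith [ht.2]]
  -- two Ioo intervals of consecutive θ intersect: indices equal
  have : i = j + m * n := by
    by_contra hne
    rcases lt_or_gt_of_ne hne with hlt | hgt
    · have : θ (i + 1) ≤ θ (j + m * n) := hmono.le_iff_le.2 (by omega)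
      linarith [hs.2, hs2.1]
    · have : θ (j + m * n + 1) ≤ θ i := hmono.le_iff_le.2 (by omega)
      linarith [hs.1, hs2.2]
  exact rel_symm ⟨m, this⟩

include hmono hper in
lemma mem_arc_window {i : ℤ} {t : ℝ} (ht : t ∈ Ico (θ i) (θ i + 2 * Real.pi))
    (hx : expMap t ∈ arc θ i) : t ∈ Ioo (θ i) (θ (i + 1)) := by
  obtain ⟨s, hs, hsx⟩ := hx
  have hsw : s ∈ Ico (θ i) (θ i + 2 * Real.pi) := by
    have h1 : θ (i + 1) ≤ θ (i + n) := hmono.le_iff_le.2 (by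
      have : (1:ℤ) ≤ n := by exact_mod_cast Nat.one_le_iff_ne_zero.2 (by
        rintro rfl
        have := hper i
        simp at this)
      omega)
    rw [hper i] at h1
    exact ⟨le_of_lt hs.1, lt_of_lt_of_le hs.2 h1⟩
  have := expMap_inj_window hsw ht hsx
  rwa [← this]

end Theta

end Core


section Main

variable {g : S1 → ℝ} {τ : S1 → S1} {n : ℕ} {θ : ℤ → ℝ}
variable (hmono : StrictMono θ) (hper : ∀ i, θ (i + n) = θ i + 2 * Real.pi)
variable (hn : 0 < n)
variable (hrange : ∀ t : ℝ, g (expMap t) = 1 ↔ t ∈ range θ)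

include hrange in
lemma zpt_one (i : ℤ) : g (zpt θ i) = 1 := (hrange (θ i)).2 ⟨i, rfl⟩

include hmono hrange in
lemma arc_ne_one {i : ℤ} {x : S1} (hx : x ∈ arc θ i) : g x ≠ 1 := by
  obtain ⟨t, ht, rfl⟩ := hx
  intro h
  obtain ⟨j, rfl⟩ := (hrange t).1 h
  have h1 := hmono.lt_iff_lt.1 ht.1
  have h2 := hmono.lt_iff_lt.1 ht.2
  omega

include hmono hper hn in
lemma compl_arc (i : ℤ) : (arc θ i)ᶜ = expMap '' Icc (θ (i+1)) (θ (i+n)) := by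
  have h1n : (1:ℤ) ≤ n := by exact_mod_cast hn
  have hii : θ (i+1) ≤ θ (i+n) := hmono.le_iff_le.2 (by omega)
  apply Subset.antisymm
  · intro x hx
    obtain ⟨t, ht, rfl⟩ := expMap_surj_window (θ i) x
    rw [← hper i] at ht
    by_cases he : t = θ i
    · refine ⟨θ (i+n), ⟨hii, le_refl _⟩, ?_⟩
      rw [hper i, ← he]
      exact expMap_add_two_pi t
    · refine ⟨t, ⟨?_, le_of_lt ht.2⟩, rfl⟩
      by_contra hlt
      push_neg at hlt
      exact hx ⟨t, ⟨lt_of_le_of_ne ht.1 (Ne.symm he), hlt⟩, rfl⟩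
  · rintro x ⟨s, hs, rfl⟩ ⟨t, ht, he⟩
    rcases expMap_eq_iff.1 he.symm with ⟨m, hm⟩
    -- s = t + 2π m
    have h1 : θ (i + m * n) = θ i + 2 * Real.pi * m := theta_shift hper m i
    have h2 : θ (i + m * n + 1) = θ (i + 1) + 2 * Real.pi * m := by
      rw [show i + m * n + 1 = (i + 1) + m * n by ring, theta_shift hper m (i+1)]
    have hs1 : θ (i + m * n) < s := by rw [h1]; linarith [ht.1]
    have hs2 : s < θ (i + m * n + 1) := by rw [h2]; linarith [ht.2]
    rcases le_or_gt m 0 with hm0 | hm0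
    · have hmn : m * n ≤ 0 := mul_nonpos_iff.2 (Or.inr ⟨hm0, by positivity⟩)
      have : θ (i + m * n + 1) ≤ θ (i + 1) := hmono.le_iff_le.2 (by omega)
      linarith [hs.1]
    · have hmn : (n:ℤ) ≤ m * n := le_mul_of_one_le_left (by positivity) hm0
      have : θ (i + n) ≤ θ (i + m * n) := hmono.le_iff_le.2 (by omega)
      linarith [hs.2]

include hmono hper hn in
lemma arc_open (i : ℤ) : IsOpen (arc θ i) := by
  rw [← isClosed_compl_iff, compl_arc hmono hper hn i]
  exact (isCompact_Icc.image_of_continuousOn expMap_continuous.continuousOn).isClosed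

include hmono in
lemma closure_arc (i : ℤ) : closure (arc θ i) = expMap '' Icc (θ i) (θ (i+1)) := by
  apply Subset.antisymm
  · exact closure_minimal (image_mono Ioo_subset_Icc_self)
      (isCompact_Icc.image_of_continuousOn expMap_continuous.continuousOn).isClosed
  · have : Icc (θ i) (θ (i+1)) = closure (Ioo (θ i) (θ (i+1))) :=
      (closure_Ioo (ne_of_lt (hmono (by omega : i < i + 1)))).symm
    rw [this]
    exact (image_closure_subset_closure_image expMap_continuous)

include hmono hper hrange in
lemma closure_arc_inter {i : ℤ} {x : S1} (hx : x ∈ closure (arc θ i)) (hx1 : g x = 1) :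
    x = zpt θ i ∨ x = zpt θ (i+1) := by
  rw [closure_arc hmono i] at hx
  obtain ⟨t, ht, rfl⟩ := hx
  obtain ⟨j, rfl⟩ := (hrange t).1 hx1
  have h1 : i ≤ j := by
    by_contra h; push_neg at h
    have := hmono.lt_iff_lt.2 h
    linarith [ht.1]
  have h2 : j ≤ i + 1 := by
    by_contra h; push_neg at h
    have := hmono.lt_iff_lt.2 h
    linarith [ht.2]
  rcases eq_or_lt_of_le h1 with rfl | hlt
  · exact Or.inl rfl
  · have : j = i + 1 := by omega
    subst this
    exact Or.inr rfl

include hmono hper hn hrange in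
lemma cover_arc {x : S1} (hx : g x ≠ 1) : ∃ j : ℤ, 0 ≤ j ∧ j < (n:ℤ) ∧ x ∈ arc θ j := by
  classical
  obtain ⟨t, ht, rfl⟩ := expMap_surj_window (θ 0) x
  have htn : t < θ (0 + n) := by rw [hper 0]; simpa using ht.2
  set P : ℕ → Prop := fun j => θ j ≤ t with hP
  have h0 : P 0 := ht.1
  set j := Nat.findGreatest P n with hj
  have hPj : P j := Nat.findGreatest_spec (Nat.zero_le n) h0
  have hjn : j < n := by
    rcases Nat.lt_or_ge j n with h | h
    · exact h
    · exfalso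
      have hjle : j ≤ n := Nat.findGreatest_le n
      have : j = n := le_antisymm hjle h
      rw [this] at hPj
      have : θ (n:ℤ) ≤ t := hPj
      rw [show ((n:ℕ):ℤ) = 0 + (n:ℤ) by ring] at this
      linarith
  have hnex : ¬ P (j + 1) :=
    Nat.findGreatest_is_greatest (n := n) (k := j + 1) (by omega) (by omega)
  have hth : θ j ≤ t := hPj
  have htlt : t < θ ((j:ℤ) + 1) := by
    have : ¬ θ ((j+1 : ℕ) : ℤ) ≤ t := hnex
    push_neg at this
    rwa [show (((j+1:ℕ)):ℤ) = (j:ℤ) + 1 by push_cast; ring] at this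
  have hne : t ≠ θ j := by
    intro h
    exact hx ((hrange t).2 ⟨j, h.symm⟩)
  exact ⟨j, by omega, by exact_mod_cast hjn, ⟨t, ⟨lt_of_le_of_ne hth (Ne.symm hne), htlt⟩, rfl⟩⟩

include hmono hper hn hrange in
lemma zero_descr {x : S1} (hx : g x = 1) : ∃ j : ℤ, 0 ≤ j ∧ j < (n:ℤ) ∧ x = zpt θ j := by
  obtain ⟨t, ht, rfl⟩ := expMap_surj_window (θ 0) x
  obtain ⟨j, rfl⟩ := (hrange t).1 hx
  have htn : θ j < θ (0 + n) := by rw [hper 0]; simpa using ht.2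
  have h1 : (0:ℤ) ≤ j := by
    have := ht.1
    by_contra h; push_neg at h
    have := hmono.lt_iff_lt.2 h
    linarith [ht.1]
  have h2 : j < n := by
    have := hmono.lt_iff_lt.1 htn
    omega
  exact ⟨j, h1, h2, rfl⟩

lemma arc_preconnected (i : ℤ) : IsPreconnected (arc θ i) :=
  isPreconnected_Ioo.image _ expMap_continuous.continuousOn

lemma arc_nonempty (i : ℤ) (hmono' : StrictMono θ) : (arc θ i).Nonempty :=
  ⟨expMap ((θ i + θ (i+1))/2), ⟨(θ i + θ (i+1))/2,
    ⟨by linarith [hmono' (by omega : i < i + 1)], by linarith [hmono' (by omega : i < i + 1)]⟩, rfl⟩⟩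

include hmono hper hn hrange in
lemma conn_in_arc {C : Set S1} (hC1 : ∀ x ∈ C, g x ≠ 1) (hC2 : IsPreconnected C)
    (hC3 : C.Nonempty) : ∃ j : ℤ, 0 ≤ j ∧ j < (n:ℤ) ∧ C ⊆ arc θ j := by
  obtain ⟨x0, hx0⟩ := hC3
  obtain ⟨j0, hj00, hj0n, hj0⟩ := cover_arc hmono hper hn hrange (hC1 x0 hx0)
  refine ⟨j0, hj00, hj0n, ?_⟩
  set v : Set S1 := ⋃ (j : Fin n) (_ : (j:ℤ) ≠ j0), arc θ (j:ℤ) with hv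
  have hvopen : IsOpen v := isOpen_iUnion fun j => isOpen_iUnion fun _ => arc_open hmono hper hn _
  have huv : Disjoint (arc θ j0) v := by
    rw [Set.disjoint_left]
    rintro x hxu hxv
    simp only [hv, mem_iUnion] at hxv
    obtain ⟨j, hjne, hjx⟩ := hxv
    have := arc_inter_rel hmono hper ⟨x, hxu, hjx⟩
    obtain ⟨m, hm⟩ := this
    have hjlt : ((j:ℕ):ℤ) < n := by exact_mod_cast j.2
    have hj0' : (0:ℤ) ≤ (j:ℕ) := by positivity
    have hmz : m = 0 := by
      rcases lt_trichotomy m 0 with h | h | h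
      · nlinarith [hm]
      · exact h
      · nlinarith [hm]
    rw [hmz, zero_mul, add_zero] at hm
    exact hjne hm
  have hsub : C ⊆ arc θ j0 ∪ v := by
    intro x hx
    obtain ⟨j, hj0', hjn', hjx⟩ := cover_arc hmono hper hn hrange (hC1 x hx)
    by_cases he : j = j0
    · exact Or.inl (he ▸ hjx)
    · refine Or.inr ?_
      simp only [hv, mem_iUnion]
      refine ⟨⟨j.toNat, by omega⟩, ?_, ?_⟩
      · simp only [Fin.val_mk]
        omega
      · have : ((⟨j.toNat, by omega⟩ : Fin n) : ℤ) = j := by simp; omega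
        rwa [this]
  exact hC2.subset_left_of_subset_union (arc_open hmono hper hn j0) hvopen huv hsub ⟨x0, hx0, hj0⟩

end Main


def sgn (g : S1 → ℝ) (θ : ℤ → ℝ) (i : ℤ) : ℤ :=
  if 1 < g (expMap ((θ i + θ (i+1))/2)) then 1 else -1

open Classical in
def chooseIdx (n : ℕ) (θ : ℤ → ℝ) (C : Set S1) : ℤ :=
  if h : ∃ j : ℤ, 0 ≤ j ∧ j < (n:ℤ) ∧ C ⊆ arc θ j then h.choose else 0

open Classical in
lemma chooseIdx_spec {n : ℕ} {θ : ℤ → ℝ} {C : Set S1}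
    (h : ∃ j : ℤ, 0 ≤ j ∧ j < (n:ℤ) ∧ C ⊆ arc θ j) :
    0 ≤ chooseIdx n θ C ∧ chooseIdx n θ C < (n:ℤ) ∧ C ⊆ arc θ (chooseIdx n θ C) := by
  rw [chooseIdx, dif_pos h]
  exact h.choose_spec

section Main2

variable {g : S1 → ℝ} {τ : S1 → S1} {n : ℕ} {θ : ℤ → ℝ}
variable (hmono : StrictMono θ) (hper : ∀ i, θ (i + n) = θ i + 2 * Real.pi)
variable (hn : 0 < n)
variable (hrange : ∀ t : ℝ, g (expMap t) = 1 ↔ t ∈ range θ)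
variable (hgc : Continuous g)
variable (hτc : Continuous τ) (hflip : ∀ x, g (τ x) = (g x)⁻¹) (hgpos : ∀ x, 0 < g x)

lemma mid_mem_arc (hmono' : StrictMono θ) (i : ℤ) :
    expMap ((θ i + θ (i+1))/2) ∈ arc θ i := by
  have := hmono' (show i < i + 1 by omega)
  exact ⟨(θ i + θ (i+1))/2, ⟨by linarith, by linarith⟩, rfl⟩

include hmono hrange hgc in
lemma arc_sign (i : ℤ) : (∀ x ∈ arc θ i, 1 < g x) ∨ (∀ x ∈ arc θ i, g x < 1) := by
  set U := g ⁻¹' Ioi 1 with hU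
  set V := g ⁻¹' Iio 1 with hV
  have hUo : IsOpen U := isOpen_Ioi.preimage hgc
  have hVo : IsOpen V := isOpen_Iio.preimage hgc
  have hd : Disjoint U V := by
    rw [Set.disjoint_left]
    intro x h1 h2
    simp only [hU, hV, mem_preimage, mem_Ioi, mem_Iio] at h1 h2
    linarith
  have hsub : arc θ i ⊆ U ∪ V := by
    intro x hx
    rcases lt_trichotomy (g x) 1 with h | h | h
    · exact Or.inr (by simp only [hV, mem_preimage, mem_Iio]; exact h)
    · exact absurd h (arc_ne_one hmono hrange hx)
    · exact Or.inl (by simp only [hU, mem_preimage, mem_Ioi]; exact h)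
  by_cases hc : (arc θ i ∩ U).Nonempty
  · left
    intro x hx
    have := (arc_preconnected i).subset_left_of_subset_union hUo hVo hd hsub hc hx
    simpa [hU] using this
  · right
    intro x hx
    rcases hsub hx with h | h
    · exact absurd ⟨x, hx, h⟩ hc
    · simpa [hV] using h

lemma sgn_pm (i : ℤ) : sgn g θ i = 1 ∨ sgn g θ i = -1 := by
  unfold sgn; split <;> simp

include hmono hrange hgc in
lemma sgn_eq_one_iff {i : ℤ} {x : S1} (hx : x ∈ arc θ i) :
    (sgn g θ i = 1 ↔ 1 < g x) := by
  rcases arc_sign hmono hrange hgc i with h | h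
  · constructor
    · intro _; exact h x hx
    · intro _
      unfold sgn
      rw [if_pos (h _ (mid_mem_arc hmono i))]
  · constructor
    · intro hs
      exfalso
      unfold sgn at hs
      rw [if_neg (not_lt.2 (le_of_lt (h _ (mid_mem_arc hmono i))))] at hs
      norm_num at hs
    · intro hgx
      exact absurd hgx (not_lt.2 (le_of_lt (h x hx)))

include hmono hrange hgc in
lemma sgn_eq_neg_one_iff {i : ℤ} {x : S1} (hx : x ∈ arc θ i) :
    (sgn g θ i = -1 ↔ g x < 1) := by
  rcases sgn_pm (g := g) (θ := θ) i with hs | hs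
  · rw [hs]
    have h1 := (sgn_eq_one_iff hmono hrange hgc hx).1 hs
    constructor
    · intro h; norm_num at h
    · intro h; exact absurd h (not_lt.2 (le_of_lt h1))
  · rw [hs]
    have h1 : ¬ (1:ℤ) = 1 → True := fun _ => trivial
    have h2 : sgn g θ i ≠ 1 := by rw [hs]; norm_num
    have h3 : ¬ 1 < g x := fun hh => h2 ((sgn_eq_one_iff hmono hrange hgc hx).2 hh)
    have h4 : g x ≠ 1 := arc_ne_one hmono hrange hx
    constructor
    · intro _; exact lt_of_le_of_ne (not_lt.1 h3) h4
    · intro _; rfl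

include hmono hper hrange hgc in
lemma sgn_rel {i j : ℤ} (h : rel n i j) : sgn g θ j = sgn g θ i := by
  have harc : arc θ j = arc θ i := arc_rel hmono hper h
  have hx : expMap ((θ i + θ (i+1))/2) ∈ arc θ j := by
    rw [harc]; exact mid_mem_arc hmono i
  have hx' : expMap ((θ i + θ (i+1))/2) ∈ arc θ i := mid_mem_arc hmono i
  rcases sgn_pm (g := g) (θ := θ) i with hs | hs
  · rw [hs]
    exact (sgn_eq_one_iff hmono hrange hgc hx).2 ((sgn_eq_one_iff hmono hrange hgc hx').1 hs)
  · rw [hs]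
    exact (sgn_eq_neg_one_iff hmono hrange hgc hx).2 ((sgn_eq_neg_one_iff hmono hrange hgc hx').1 hs)

include hmono hrange hgc hflip hgpos in
lemma sgn_u {i j : ℤ} (hsub : τ '' arc θ i ⊆ arc θ j) : sgn g θ j = - sgn g θ i := by
  set x := expMap ((θ i + θ (i+1))/2) with hx
  have hxm : x ∈ arc θ i := mid_mem_arc hmono i
  have hτx : τ x ∈ arc θ j := hsub (mem_image_of_mem _ hxm)
  have hfl : g (τ x) = (g x)⁻¹ := hflip x
  rcases sgn_pm (g := g) (θ := θ) i with hs | hs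
  · rw [hs]
    have h1 : 1 < g x := (sgn_eq_one_iff hmono hrange hgc hxm).1 hs
    have h2 : g (τ x) < 1 := by
      rw [hfl]
      have h3 := hgpos x
      have h4 : (g x) * (g x)⁻¹ = 1 := mul_inv_cancel₀ (ne_of_gt h3)
      nlinarith [inv_pos.2 h3]
    exact (sgn_eq_neg_one_iff hmono hrange hgc hτx).2 h2
  · rw [hs]
    have h1 : g x < 1 := (sgn_eq_neg_one_iff hmono hrange hgc hxm).1 hs
    have h2 : 1 < g (τ x) := by
      rw [hfl]
      have h3 := hgpos x
      have h4 : (g x) * (g x)⁻¹ = 1 := mul_inv_cancel₀ (ne_of_gt h3)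
      nlinarith [inv_pos.2 h3]
    rw [neg_neg]
    exact (sgn_eq_one_iff hmono hrange hgc hτx).2 h2

include hmono hrange hgc in
lemma sgn_add_nat (i : ℤ) (hsucc : ∀ j : ℤ, sgn g θ (j+1) = - sgn g θ j) :
    ∀ m : ℕ, sgn g θ (i + m) = (-1)^m * sgn g θ i := by
  intro m
  induction m with
  | zero => simp
  | succ k ih =>
      have : i + ((k:ℤ) + 1) = (i + k) + 1 := by ring
      push_cast
      rw [this, hsucc (i + k), ih]
      ring

include hmono hper hn hrange hgc in
lemma sgn_succ (hloc : ∀ x : S1, g x = 1 → ∃ V : Set S1, IsOpen V ∧ x ∈ V ∧ InjOn g V)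
    (i : ℤ) : sgn g θ (i+1) = - sgn g θ i := by
  have hz : g (expMap (θ (i+1))) = 1 := (hrange _).2 ⟨i+1, rfl⟩
  obtain ⟨V, hVo, hVm, hVinj⟩ := hloc _ hz
  set t0 := θ (i+1) with ht0
  have hWo : IsOpen (expMap ⁻¹' V) := hVo.preimage expMap_continuous
  obtain ⟨ε, hε, hball⟩ := Metric.isOpen_iff.1 hWo t0 hVm
  have hgapL : 0 < θ (i+1) - θ i := by linarith [hmono (show i < i+1 by omega)]
  have hgapR : 0 < θ (i+1+1) - θ (i+1) := by linarith [hmono (show i+1 < i+1+1 by omega)]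
  have hpi := Real.pi_pos
  set δ := min (min (ε/2) Real.pi) (min ((θ (i+1) - θ i)/2) ((θ (i+1+1) - θ (i+1))/2)) with hδ
  have hδpos : 0 < δ := by
    apply lt_min (lt_min (by linarith) hpi) (lt_min (by linarith) (by linarith))
  have hδε : δ < ε := lt_of_le_of_lt (le_trans (min_le_left _ _) (min_le_left _ _)) (by linarith)
  have hδπ : δ ≤ Real.pi := le_trans (min_le_left _ _) (min_le_right _ _)
  have hδL : δ ≤ (θ (i+1) - θ i)/2 := le_trans (min_le_right _ _) (min_le_left _ _)
  have hδR : δ ≤ (θ (i+1+1) - θ (i+1))/2 := le_trans (min_le_right _ _) (min_le_right _ _)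
  have hsubV : Ioo (t0 - δ) (t0 + δ) ⊆ expMap ⁻¹' V := by
    intro t htm
    apply hball
    rw [Metric.mem_ball, Real.dist_eq, abs_lt]
    constructor
    · linarith [htm.1]
    · linarith [htm.2]
  have hinj : InjOn (fun t => g (expMap t)) (Ioo (t0 - δ) (t0 + δ)) := by
    intro s hs t ht hst
    have h1 : expMap s ∈ V := hsubV hs
    have h2 : expMap t ∈ V := hsubV ht
    have h3 : expMap s = expMap t := hVinj h1 h2 hst
    refine expMap_inj_window (c := t0 - δ) ⟨le_of_lt hs.1, ?_⟩ ⟨le_of_lt ht.1, ?_⟩ h3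
    · calc s < t0 + δ := hs.2
      _ ≤ t0 - δ + 2 * Real.pi := by linarith
    · calc t < t0 + δ := ht.2
      _ ≤ t0 - δ + 2 * Real.pi := by linarith
  have hcont : ContinuousOn (fun t => g (expMap t)) (Ioo (t0-δ) (t0+δ)) :=
    (hgc.comp expMap_continuous).continuousOn
  have hIoo : t0 - δ < t0 + δ := by linarith
  have hmem0 : t0 ∈ Ioo (t0-δ) (t0+δ) := ⟨by linarith, by linarith⟩
  have hmema : t0 - δ/2 ∈ Ioo (t0-δ) (t0+δ) := ⟨by linarith, by linarith⟩
  have hmemb : t0 + δ/2 ∈ Ioo (t0-δ) (t0+δ) := ⟨by linarith, by linarith⟩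
  have haarc : expMap (t0 - δ/2) ∈ arc θ i :=
    ⟨t0 - δ/2, ⟨by simp only [ht0]; linarith, by simp only [ht0]; linarith⟩, rfl⟩
  have hbarc : expMap (t0 + δ/2) ∈ arc θ (i+1) :=
    ⟨t0 + δ/2, ⟨by simp only [ht0]; linarith, by simp only [ht0]; linarith⟩, rfl⟩
  rcases ContinuousOn.strictMonoOn_of_injOn_Ioo hIoo hcont hinj with hm | ha
  · have h1 : g (expMap (t0 - δ/2)) < 1 := by
      have := hm hmema hmem0 (by linarith)
      simp only at this
      rwa [hz] at this
    have h2 : 1 < g (expMap (t0 + δ/2)) := by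
      have := hm hmem0 hmemb (by linarith)
      simp only at this
      rwa [hz] at this
    have e1 : sgn g θ i = -1 := (sgn_eq_neg_one_iff hmono hrange hgc haarc).2 h1
    have e2 : sgn g θ (i+1) = 1 := (sgn_eq_one_iff hmono hrange hgc hbarc).2 h2
    rw [e1, e2]; norm_num
  · have h1 : 1 < g (expMap (t0 - δ/2)) := by
      have := ha hmema hmem0 (by linarith)
      simp only at this
      rwa [hz] at this
    have h2 : g (expMap (t0 + δ/2)) < 1 := by
      have := ha hmem0 hmemb (by linarith)
      simp only at this
      rwa [hz] at this
    have e1 : sgn g θ i = 1 := (sgn_eq_one_iff hmono hrange hgc haarc).2 h1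
    have e2 : sgn g θ (i+1) = -1 := (sgn_eq_neg_one_iff hmono hrange hgc hbarc).2 h2
    rw [e1, e2]

end Main2


section Main3

variable {g : S1 → ℝ} {τ : S1 → S1} {n : ℕ} {θ : ℤ → ℝ}
variable (hmono : StrictMono θ) (hper : ∀ i, θ (i + n) = θ i + 2 * Real.pi)
variable (hn : 0 < n)
variable (hrange : ∀ t : ℝ, g (expMap t) = 1 ↔ t ∈ range θ)
variable (hτc : Continuous τ) (hflip : ∀ x, g (τ x) = (g x)⁻¹)
variable (hgpos : ∀ x, 0 < g x)

include hmono in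
lemma zpt_mem_closure_left (j : ℤ) : zpt θ j ∈ closure (arc θ j) := by
  rw [closure_arc hmono]
  exact ⟨θ j, ⟨le_refl _, le_of_lt (hmono (by omega : j < j + 1))⟩, rfl⟩

include hmono in
lemma zpt_mem_closure_right (j : ℤ) : zpt θ (j+1) ∈ closure (arc θ j) := by
  rw [closure_arc hmono]
  exact ⟨θ (j+1), ⟨le_of_lt (hmono (by omega : j < j + 1)), le_refl _⟩, rfl⟩

include hτc in
lemma tau_closure_step {u : ℤ → ℤ} (hu : ∀ i, τ '' arc θ i ⊆ arc θ (u i))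
    {j : ℤ} {w : S1} (hw : w ∈ closure (arc θ j)) : τ w ∈ closure (arc θ (u j)) := by
  have h1 : τ w ∈ τ '' closure (arc θ j) := mem_image_of_mem _ hw
  have h2 : τ '' closure (arc θ j) ⊆ closure (τ '' arc θ j) :=
    image_closure_subset_closure_image hτc
  exact closure_mono (hu j) (h2 h1)

include hmono hper hrange hτc hflip hgpos in
lemma fixarc (hn3 : 3 ≤ n) (hfree2 : ∀ x, τ (τ x) ≠ x) {u : ℤ → ℤ}
    (hu : ∀ i, τ '' arc θ i ⊆ arc θ (u i))
    (huu : ∀ i, rel n i (u (u i))) : False := by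
  set x := zpt θ 1 with hxd
  set y := τ (τ x) with hyd
  have hy1 : g y = 1 := by
    rw [hyd, hflip, hflip, inv_inv]
    exact zpt_one hrange 1
  have hy0 : y ∈ closure (arc θ 0) := by
    have s1 : x ∈ closure (arc θ 0) := zpt_mem_closure_right hmono 0
    have s2 := tau_closure_step hτc hu (u := u) s1
    have s3 := tau_closure_step hτc hu (u := u) s2
    rwa [arc_rel hmono hper (huu 0)] at s3
  have hy1' : y ∈ closure (arc θ 1) := by
    have s1 : x ∈ closure (arc θ 1) := zpt_mem_closure_left hmono 1
    have s2 := tau_closure_step hτc hu (u := u) s1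
    have s3 := tau_closure_step hτc hu (u := u) s2
    rwa [arc_rel hmono hper (huu 1)] at s3
  have c1 := closure_arc_inter hmono hper hrange hy0 hy1
  have c2 := closure_arc_inter hmono hper hrange hy1' hy1
  norm_num at c1 c2
  rcases c1 with e1 | e1
  · rcases c2 with e2 | e2
    · have h1 := zpt_inj hmono hper (e1.symm.trans e2 : zpt θ 0 = zpt θ 1)
      rw [rel_sub_iff] at h1
      have := Int.le_of_dvd (by norm_num) h1
      omega
    · have h1 := zpt_inj hmono hper (e1.symm.trans e2 : zpt θ 0 = zpt θ 2)
      rw [rel_sub_iff] at h1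
      have := Int.le_of_dvd (by norm_num) h1
      omega
  · exact hfree2 x ((hyd.symm.trans e1).trans hxd.symm)

include hmono hper hrange hτc hflip in
lemma adj (hn3 : 3 ≤ n) {u : ℤ → ℤ}
    (hu : ∀ i, τ '' arc θ i ⊆ arc θ (u i))
    (huinj : ∀ i j, rel n (u i) (u j) → rel n i j) (i : ℤ) :
    rel n (u (i+1)) (u i + 1) ∨ rel n (u (i+1)) (u i - 1) := by
  set y := τ (zpt θ (i+1)) with hyd
  have hy1 : g y = 1 := by
    rw [hyd, hflip]
    rw [zpt_one hrange (i+1)]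
    norm_num
  have hyc1 : y ∈ closure (arc θ (u i)) :=
    tau_closure_step hτc hu (zpt_mem_closure_right hmono i)
  have hyc2 : y ∈ closure (arc θ (u (i+1))) :=
    tau_closure_step hτc hu (zpt_mem_closure_left hmono (i+1))
  have hrel1 : ¬ rel n (u i) (u (i+1)) := by
    intro h
    have h3 := rel_sub_iff.1 (huinj _ _ (rel_symm h))
    rw [show i - (i+1) = (-1:ℤ) by ring] at h3
    have h4 : ((n:ℤ)) ∣ 1 := (dvd_neg).1 h3
    have := Int.le_of_dvd one_pos h4
    omega
  rcases closure_arc_inter hmono hper hrange hyc1 hy1 with e1 | e1 <;>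
    rcases closure_arc_inter hmono hper hrange hyc2 hy1 with e2 | e2
  · exact absurd (zpt_inj hmono hper (e1.symm.trans e2)) hrel1
  · -- y = zpt (u i), y = zpt (u (i+1) + 1)
    right
    have h := zpt_inj hmono hper (e2.symm.trans e1)
    have h2 := rel_add (-1) h
    rw [show u (i+1) + 1 + -1 = u (i+1) by ring, show u i + -1 = u i - 1 by ring] at h2
    exact h2
  · -- y = zpt (u i + 1), y = zpt (u (i+1))
    left
    exact zpt_inj hmono hper (e2.symm.trans e1)
  · -- both +1
    exfalso
    have h := zpt_inj hmono hper (e2.symm.trans e1)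
    have h2 := rel_add (-1) h
    rw [show u (i+1) + 1 + -1 = u (i+1) by ring, show u i + 1 + -1 = u i by ring] at h2
    exact hrel1 (rel_symm h2)

end Main3


lemma rel_of_eq {n : ℕ} {i j i' j' : ℤ} (h : rel n i j) (hi : i' = i) (hj : j' = j) :
    rel n i' j' := by rw [hi, hj]; exact h

lemma num_lemma {n R : ℕ} (hne : Even n) (h4 : n ∣ 4*R) (h2 : ¬ n ∣ 2*R) (hR : Odd R) :
    ∃ k, Odd k ∧ n = 4 * k := by
  obtain ⟨a, ha⟩ := hne
  have hn2 : n = 2 * a := by omega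
  have ha2 : a ∣ 2 * R := by
    have h44 : 2 * a ∣ 2 * (2 * R) := by
      rw [← hn2, show 2 * (2 * R) = 4 * R by ring]
      exact h4
    exact (mul_dvd_mul_iff_left (two_ne_zero)).1 h44
  rcases Nat.even_or_odd a with hae | hao
  · obtain ⟨k, hk⟩ := hae
    have hk2 : a = 2 * k := by omega
    have hkR : k ∣ R := by
      have h44 : 4 * k ∣ 4 * R := by
        rw [show 4 * k = n by omega]
        exact h4
      exact (mul_dvd_mul_iff_left (by norm_num : (4:ℕ) ≠ 0)).1 h44
    refine ⟨k, ?_, by omega⟩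
    rcases Nat.even_or_odd k with hke | hko
    · exfalso
      obtain ⟨m, hm⟩ := hke
      obtain ⟨c, hc⟩ := hkR
      have hev : Even R := ⟨m * c, by rw [hc, hm]; ring⟩
      rw [Nat.odd_iff] at hR
      rw [Nat.even_iff] at hev
      omega
    · exact hko
  · exfalso
    have hndvd : ¬ 2 ∣ a := by rw [Nat.odd_iff] at hao; omega
    have hcop : Nat.Coprime a 2 :=
      Nat.coprime_comm.mp (Nat.prime_two.coprime_iff_not_dvd.mpr hndvd)
    have haR : a ∣ R := hcop.dvd_of_dvd_mul_left ha2
    exact h2 (by rw [hn2]; exact mul_dvd_mul_left 2 haR)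

theorem core {g : S1 → ℝ} {τ : S1 → S1}
    (hgc : Continuous g) (hgpos : ∀ x, 0 < g x)
    (hτc : Continuous τ)
    (hτ4 : ∀ x, τ (τ (τ (τ x))) = x)
    (hfree2 : ∀ x, τ (τ x) ≠ x)
    (hflip : ∀ x, g (τ x) = (g x)⁻¹)
    (hloc : ∀ x, g x = 1 → ∃ V : Set S1, IsOpen V ∧ x ∈ V ∧ InjOn g V) :
    {x : S1 | g x = 1}.Finite ∧ ∃ k : ℕ, Odd k ∧ {x : S1 | g x = 1}.ncard = 4 * k := by
  classical
  set Zs := {x : S1 | g x = 1} with hZs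
  have hZclosed : IsClosed Zs := isClosed_eq hgc continuous_const
  have hZcpt : IsCompact Zs := hZclosed.isCompact
  -- finiteness
  have hZfin : Zs.Finite := by
    have hloc' : ∀ x : S1, ∃ V : Set S1, x ∈ Zs → (IsOpen V ∧ x ∈ V ∧ InjOn g V) := by
      intro x
      by_cases h : g x = 1
      · obtain ⟨V, h1, h2, h3⟩ := hloc x h
        exact ⟨V, fun _ => ⟨h1, h2, h3⟩⟩
      · exact ⟨∅, fun hx => absurd hx h⟩
    choose c hc using hloc'
    have hco : ∀ x ∈ Zs, IsOpen (c x) := fun x hx => (hc x hx).1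
    have hcov : Zs ⊆ ⋃ x ∈ Zs, c x :=
      fun x hx => mem_biUnion hx (hc x hx).2.1
    obtain ⟨b, hbZ, hbfin, hbcov⟩ := hZcpt.elim_finite_subcover_image hco hcov
    apply hbfin.subset
    intro y hy
    have hmem := hbcov hy
    rw [mem_iUnion₂] at hmem
    obtain ⟨x, hxb, hyx⟩ := hmem
    have hxZ : x ∈ Zs := hbZ hxb
    have heq : y = x := (hc x hxZ).2.2 hyx (hc x hxZ).2.1
      (by rw [show g y = 1 from hy, show g x = 1 from hxZ])
    rwa [heq]
  -- nonemptiness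
  have hpre : PreconnectedSpace S1 :=
    Subtype.preconnectedSpace
      (isConnected_sphere (by rw [Complex.rank_real_complex]; norm_num) 0 zero_le_one).isPreconnected
  have hex : ∃ x : S1, g x = 1 := by
    by_contra hno
    push_neg at hno
    have hiv : ∀ a b : S1, Icc (g a) (g b) ⊆ g '' univ :=
      fun a b => isPreconnected_univ.intermediate_value (mem_univ a) (mem_univ b) hgc.continuousOn
    have key : ∀ x : S1, g x < 1 → False := by
      intro x hx
      have h1 : 1 < g (τ x) := by
        rw [hflip]
        have h3 := hgpos x
        have h4 : (g x) * (g x)⁻¹ = 1 := mul_inv_cancel₀ (ne_of_gt h3)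
        nlinarith [inv_pos.2 h3]
      obtain ⟨z, _, hz⟩ := hiv x (τ x) ⟨le_of_lt hx, le_of_lt h1⟩
      exact hno z hz
    rcases lt_or_gt_of_ne (hno (expMap 0)) with hlt | hgt
    · exact key _ hlt
    · have h1 : g (τ (expMap 0)) < 1 := by
        rw [hflip]
        have h3 := hgpos (expMap 0)
        have h4 : (g (expMap 0)) * (g (expMap 0))⁻¹ = 1 := mul_inv_cancel₀ (ne_of_gt h3)
        nlinarith [inv_pos.2 h3]
      exact key _ h1
  -- enumeration
  set B := {t : ℝ | g (expMap t) = 1} with hB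
  have hBper : ∀ t, t + 2 * Real.pi ∈ B ↔ t ∈ B := by
    intro t
    simp only [hB, mem_setOf_eq, expMap_add_two_pi]
  have hBinj : InjOn expMap (B ∩ Ico 0 (2 * Real.pi)) := by
    intro s hs t ht h
    refine expMap_inj_window (c := 0) ?_ ?_ h
    · rw [zero_add]; exact hs.2
    · rw [zero_add]; exact ht.2
  have hBIfin : (B ∩ Ico 0 (2 * Real.pi)).Finite := by
    apply Set.Finite.of_finite_image _ hBinj
    apply hZfin.subset
    rintro x ⟨t, ⟨ht1, _⟩, rfl⟩
    exact ht1
  have hBne : (B ∩ Ico 0 (2 * Real.pi)).Nonempty := by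
    obtain ⟨x, hx⟩ := hex
    obtain ⟨t, ht, rfl⟩ := expMap_surj_window 0 x
    rw [zero_add] at ht
    exact ⟨t, hx, ht⟩
  obtain ⟨n, θ, hn, hcard, hmono, hper, hrangeEq⟩ := exists_enum B hBper hBIfin hBne
  have hrange : ∀ t : ℝ, g (expMap t) = 1 ↔ t ∈ range θ := by
    intro t
    rw [hrangeEq]
    exact Iff.rfl
  -- cardinality
  have hZeq : Zs = expMap '' (B ∩ Ico 0 (2 * Real.pi)) := by
    ext x
    constructor
    · intro hx
      obtain ⟨t, ht, rfl⟩ := expMap_surj_window 0 x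
      rw [zero_add] at ht
      exact ⟨t, ⟨hx, ht⟩, rfl⟩
    · rintro ⟨t, ⟨ht1, _⟩, rfl⟩
      exact ht1
  have hncard : Zs.ncard = n := by
    rw [hZeq, Set.ncard_image_of_injOn hBinj, hcard]
  -- small n excluded
  have hτZ : ∀ x : S1, g x = 1 → g (τ x) = 1 := by
    intro x hx
    rw [hflip, hx]
    norm_num
  have hn3 : 3 ≤ n := by
    by_contra hlt
    push_neg at hlt
    obtain ⟨j, hj0, hjn, hj⟩ := zero_descr hmono hper hn hrange (hτZ _ (zpt_one hrange 0))
    by_cases hjz : j = 0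
    · rw [hjz] at hj
      exact hfree2 (zpt θ 0) (by rw [hj]; exact hj)
    · have hj1 : j = 1 := by omega
      rw [hj1] at hj
      obtain ⟨j', hj'0, hj'n, hj'⟩ := zero_descr hmono hper hn hrange (hτZ _ (zpt_one hrange 1))
      by_cases hj'1 : j' = 1
      · rw [hj'1] at hj'
        exact hfree2 (zpt θ 1) (by rw [hj']; exact hj')
      · have : j' = 0 := by omega
        rw [this] at hj'
        exact hfree2 (zpt θ 0) (by rw [hj, hj'])
  -- the arc maps
  set τ3 : S1 → S1 := fun x => τ (τ (τ x)) with hτ3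
  have hτ3c : Continuous τ3 := hτc.comp (hτc.comp hτc)
  have hflip1 : ∀ x : S1, g x ≠ 1 → g (τ x) ≠ 1 := by
    intro x hx h
    rw [hflip] at h
    exact hx (inv_eq_one.1 h)
  have hflip3 : ∀ x : S1, g x ≠ 1 → g (τ3 x) ≠ 1 := fun x hx =>
    hflip1 _ (hflip1 _ (hflip1 _ hx))
  have hex1 : ∀ (ψ : S1 → S1), Continuous ψ → (∀ x, g x ≠ 1 → g (ψ x) ≠ 1) →
      ∀ i : ℤ, ∃ j, 0 ≤ j ∧ j < (n:ℤ) ∧ ψ '' arc θ i ⊆ arc θ j := by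
    intro ψ hψc hψ i
    apply conn_in_arc hmono hper hn hrange
    · rintro x ⟨y, hy, rfl⟩
      exact hψ y (arc_ne_one hmono hrange hy)
    · exact (arc_preconnected i).image ψ hψc.continuousOn
    · exact (arc_nonempty i hmono).image ψ
  set u : ℤ → ℤ := fun i => chooseIdx n θ (τ '' arc θ i) with hu_def
  have hu : ∀ i, 0 ≤ u i ∧ u i < (n:ℤ) ∧ τ '' arc θ i ⊆ arc θ (u i) :=
    fun i => chooseIdx_spec (hex1 τ hτc hflip1 i)
  set u3 : ℤ → ℤ := fun i => chooseIdx n θ (τ3 '' arc θ i) with hu3_def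
  have hu3 : ∀ i, 0 ≤ u3 i ∧ u3 i < (n:ℤ) ∧ τ3 '' arc θ i ⊆ arc θ (u3 i) :=
    fun i => chooseIdx_spec (hex1 τ3 hτ3c hflip3 i)
  have huarc : ∀ i, τ '' arc θ i ⊆ arc θ (u i) := fun i => (hu i).2.2
  have hu3arc : ∀ i, τ3 '' arc θ i ⊆ arc θ (u3 i) := fun i => (hu3 i).2.2
  have hucong : ∀ i j, rel n i j → u i = u j := by
    intro i j h
    simp only [hu_def]
    rw [arc_rel hmono hper h]
  have hu3cong : ∀ i j, rel n i j → u3 i = u3 j := by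
    intro i j h
    simp only [hu3_def]
    rw [arc_rel hmono hper h]
  have hrelu3u : ∀ i, rel n i (u3 (u i)) := by
    intro i
    obtain ⟨x, hx⟩ := arc_nonempty i hmono
    have h1 : τ x ∈ arc θ (u i) := huarc i (mem_image_of_mem _ hx)
    have h2 : τ3 (τ x) ∈ arc θ (u3 (u i)) := hu3arc (u i) (mem_image_of_mem _ h1)
    have h3 : τ3 (τ x) = x := hτ4 x
    rw [h3] at h2
    exact arc_inter_rel hmono hper ⟨x, hx, h2⟩
  have huinj : ∀ i j, rel n (u i) (u j) → rel n i j := by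
    intro i j h
    have e : u3 (u i) = u3 (u j) := hu3cong _ _ h
    refine rel_trans (hrelu3u i) ?_
    rw [e]
    exact rel_symm (hrelu3u j)
  have hreluu4 : ∀ i, rel n i (u (u (u (u i)))) := by
    intro i
    obtain ⟨x, hx⟩ := arc_nonempty i hmono
    have h1 : τ x ∈ arc θ (u i) := huarc i (mem_image_of_mem _ hx)
    have h2 : τ (τ x) ∈ arc θ (u (u i)) := huarc (u i) (mem_image_of_mem _ h1)
    have h3 : τ (τ (τ x)) ∈ arc θ (u (u (u i))) := huarc (u (u i)) (mem_image_of_mem _ h2)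
    have h4 : τ (τ (τ (τ x))) ∈ arc θ (u (u (u (u i)))) :=
      huarc (u (u (u i))) (mem_image_of_mem _ h3)
    rw [hτ4 x] at h4
    exact arc_inter_rel hmono hper ⟨x, hx, h4⟩
  have hadj : ∀ i, rel n (u (i+1)) (u i + 1) ∨ rel n (u (i+1)) (u i - 1) :=
    adj hmono hper hrange hτc hflip hn3 huarc huinj
  -- direction constancy
  have hnd2 : ¬ ((n:ℤ) ∣ 2) := by
    intro h
    have := Int.le_of_dvd (by norm_num) h
    omega
  set D : ℤ → Prop := fun i => rel n (u (i+1)) (u i + 1) with hD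
  have hstep : ∀ i, D i ↔ D (i+1) := by
    intro i
    simp only [hD]
    constructor
    · intro h1
      rcases hadj (i+1) with h2 | h2
      · exact h2
      · exfalso
        have h3 : rel n (u (i+1) - 1) (u i) :=
          rel_of_eq (rel_add (-1) h1) (by ring) (by ring)
        have h4 : rel n (u (i+1+1)) (u i) := rel_trans h2 h3
        have h5 := huinj _ _ h4
        rw [rel_sub_iff] at h5
        exact hnd2 (by rw [show i - (i+1+1) = -2 by ring] at h5; exact (dvd_neg).1 h5)
    · intro h1
      rcases hadj i with h2 | h2
      · exact h2
      · exfalso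
        have h3 : rel n (u (i+1) + 1) (u i) :=
          rel_of_eq (rel_add 1 h2) rfl (by ring)
        have h4 : rel n (u (i+1+1)) (u i) := rel_trans h1 h3
        have h5 := huinj _ _ h4
        rw [rel_sub_iff] at h5
        exact hnd2 (by rw [show i - (i+1+1) = -2 by ring] at h5; exact (dvd_neg).1 h5)
  have hiff : ∀ i, (D i ↔ D 0) := by
    intro i
    induction i using Int.induction_on with
    | zero => exact Iff.rfl
    | succ k ih => rw [← ih]; exact (hstep k).symm
    | pred k ih =>
        rw [← ih]
        have h := hstep (-(k:ℤ)-1)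
        rw [show (-(k:ℤ)-1+1) = -(k:ℤ) by ring] at h
        exact h
  have hdirall : (∀ i, rel n (u (i+1)) (u i + 1)) ∨ (∀ i, rel n (u (i+1)) (u i - 1)) := by
    by_cases h0 : D 0
    · left
      exact fun i => (hiff i).2 h0
    · right
      intro i
      rcases hadj i with h | h
      · exact absurd ((hiff i).1 h) h0
      · exact h
  -- fixed-arc contradiction helper
  have hfix : ¬ (∀ i, rel n i (u (u i))) :=
    fun hcon => fixarc hmono hper hrange hτc hflip hgpos hn3 hfree2 huarc hcon
  rcases hdirall with hrotd | hrefd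
  · -- rotation case
    have hrot : ∀ i : ℤ, rel n (u i) (u 0 + i) := by
      intro i
      induction i using Int.induction_on with
      | zero => exact rel_of_eq (rel_refl (u 0)) rfl (by ring)
      | succ k ih =>
          have h1 := hrotd k
          have h2 := rel_add 1 ih
          exact rel_trans h1 (rel_of_eq h2 rfl (by push_cast; ring))
      | pred k ih =>
          have h1 := hrotd (-(k:ℤ)-1)
          rw [show (-(k:ℤ)-1+1) = -(k:ℤ) by ring] at h1
          have h2 : rel n (u (-(k:ℤ)-1)) (u (-(k:ℤ)) - 1) :=
            rel_of_eq (rel_add (-1) (rel_symm h1)) (by ring) (by ring)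
          have h3 := rel_add (-1) ih
          exact rel_trans h2 (rel_of_eq h3 (by ring) (by push_cast; ring))
    set r : ℤ := u 0 with hrdef
    have hr0 : 0 ≤ r := (hu 0).1
    have hrn : r < (n:ℤ) := (hu 0).2.1
    have huu : ∀ i, rel n (u (u i)) (2*r + i) := by
      intro i
      have e : u (u i) = u (r + i) := hucong _ _ (rel_of_eq (hrot i) rfl (by ring))
      rw [e]
      exact rel_of_eq (hrot (r + i)) rfl (by ring)
    have h2r : ¬ rel n (2*r) 0 := by
      intro hcon
      apply hfix
      intro i
      have h1 := huu i
      have h2 : rel n (2*r + i) i := rel_of_eq (rel_add i hcon) rfl (by ring)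
      exact rel_symm (rel_trans h1 h2)
    have h4r : rel n 0 (4*r) := by
      have a1 := hreluu4 0
      have a2 := huu (u (u 0))
      have a3 := huu 0
      have a4 : rel n (2*r + u (u 0)) (4*r) := by
        have := rel_add (2*r) a3
        exact rel_of_eq this (by ring) (by ring)
      exact rel_trans a1 (rel_trans a2 a4)
    -- signs
    have hsucc : ∀ j : ℤ, sgn g θ (j+1) = - sgn g θ j :=
      sgn_succ hmono hper hn hrange hgc hloc
    have hsgnu : sgn g θ r = - sgn g θ 0 := sgn_u hmono hrange hgc hflip hgpos (huarc 0)
    set R : ℕ := r.toNat with hRdef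
    have hrR : (R : ℤ) = r := by omega
    have hpow : sgn g θ r = (-1)^R * sgn g θ 0 := by
      have := sgn_add_nat hmono hrange hgc 0 hsucc R
      rw [show (0:ℤ) + (R:ℤ) = r by omega] at this
      exact this
    have hRodd : Odd R := by
      rcases Nat.even_or_odd R with he | ho
      · exfalso
        have h1 : ((-1:ℤ))^R = 1 := he.neg_one_pow
        rw [h1, one_mul] at hpow
        rcases sgn_pm (g := g) (θ := θ) 0 with h | h <;> rw [h] at hpow hsgnu <;> omega
      · exact ho
    have hneven : Even n := by
      rcases Nat.even_or_odd n with he | ho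
      · exact he
      · exfalso
        have h1 : sgn g θ ((0:ℤ) + (n:ℤ)) = sgn g θ 0 :=
          sgn_rel hmono hper hrange hgc ⟨1, by ring⟩
        have h2 := sgn_add_nat hmono hrange hgc 0 hsucc n
        rw [h1] at h2
        have h3 : ((-1:ℤ))^n = -1 := ho.neg_one_pow
        rw [h3] at h2
        rcases sgn_pm (g := g) (θ := θ) 0 with h | h <;> rw [h] at h2 <;> omega
    have hdvd4 : (n:ℤ) ∣ 4 * r := by
      have := rel_sub_iff.1 h4r
      rwa [sub_zero] at this
    have hndvd2 : ¬ (n:ℤ) ∣ 2 * r := by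
      intro hcon
      apply h2r
      rw [rel_sub_iff]
      rw [show (0:ℤ) - 2*r = -(2*r) by ring]
      exact dvd_neg.2 hcon
    have hdvd4' : n ∣ 4 * R := by
      have : ((n:ℤ)) ∣ ((4 * R : ℕ) : ℤ) := by push_cast; rw [hrR]; exact hdvd4
      exact_mod_cast this
    have hndvd2' : ¬ n ∣ 2 * R := by
      intro hcon
      apply hndvd2
      have : ((n:ℤ)) ∣ ((2 * R : ℕ) : ℤ) := Int.natCast_dvd_natCast.2 hcon
      rwa [show ((2 * R : ℕ) : ℤ) = 2 * r by push_cast; rw [hrR]] at this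
    obtain ⟨k, hk, hkn⟩ := num_lemma hneven hdvd4' hndvd2' hRodd
    exact ⟨hZfin, k, hk, by rw [hncard, hkn]⟩
  · -- reflection case: contradiction
    exfalso
    have hrefl : ∀ i : ℤ, rel n (u i) (u 0 - i) := by
      intro i
      induction i using Int.induction_on with
      | zero => exact rel_of_eq (rel_refl (u 0)) rfl (by ring)
      | succ k ih =>
          have h1 := hrefd k
          have h2 := rel_add (-1) ih
          exact rel_trans h1 (rel_of_eq h2 (by ring) (by push_cast; ring))
      | pred k ih =>
          have h1 := hrefd (-(k:ℤ)-1)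
          rw [show (-(k:ℤ)-1+1) = -(k:ℤ) by ring] at h1
          have h2 : rel n (u (-(k:ℤ)-1)) (u (-(k:ℤ)) + 1) :=
            rel_of_eq (rel_add 1 (rel_symm h1)) (by ring) (by ring)
          have h3 := rel_add 1 ih
          exact rel_trans h2 (rel_of_eq h3 rfl (by push_cast; ring))
    apply hfix
    intro i
    have e : u (u i) = u (u 0 - i) := hucong _ _ (hrefl i)
    rw [e]
    have h2 := hrefl (u 0 - i)
    exact rel_symm (rel_of_eq h2 rfl (by ring))

end E4K

theorem elliptic_4k_squares (φ : S1 → ℂ) (hφ : IsCCWJordan φ)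
    (hpoly : IsPolygon (Set.range φ))
    (ζ : Set (Fin 4 → ℂ))
    (hcomp : ∃ R ∈ inscribed (Set.range φ),
      ζ = connectedComponentIn (inscribed (Set.range φ)) R)
    (e : S1 ≃ₜ ζ)
    (hinv : relabel '' ζ = ζ)
    (hloc : ∀ R ∈ ζ, aspect R = 1 →
      ∃ U : Set (Fin 4 → ℂ), IsOpen U ∧ R ∈ U ∧ Set.InjOn aspect (U ∩ ζ)) :
    {R ∈ ζ | aspect R = 1}.Finite ∧
      ∃ k : ℕ, Odd k ∧ {R ∈ ζ | aspect R = 1}.ncard = 4 * k := by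
  classical
  have hζsub : ζ ⊆ inscribed (Set.range φ) := by
    obtain ⟨R0, hR0, rfl⟩ := hcomp
    exact connectedComponentIn_subset _ _
  set emb : S1 → (Fin 4 → ℂ) := fun x => ((e x : ↥ζ) : Fin 4 → ℂ) with hemb
  have hembc : Continuous emb := continuous_subtype_val.comp e.continuous
  have hembinj : Function.Injective emb := fun a b h => e.injective (Subtype.ext h)
  have hembmem : ∀ x, emb x ∈ ζ := fun x => (e x).2
  have hne10 : ∀ R ∈ ζ, R 1 ≠ R 0 := fun R hR => (hζsub hR).1.1
  have hne21 : ∀ R ∈ ζ, R 2 - R 1 ≠ 0 := by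
    intro R hR
    obtain ⟨h10, r, hr, he2, _⟩ := (hζsub hR).1
    rw [he2]
    apply mul_ne_zero (mul_ne_zero Complex.I_ne_zero _) (sub_ne_zero.2 h10)
    exact_mod_cast ne_of_gt hr
  have hne20 : ∀ R ∈ ζ, R 2 ≠ R 0 := by
    intro R hR h20
    obtain ⟨h10, r, hr, he2, _⟩ := (hζsub hR).1
    have hfac : (Complex.I * r + 1) * (R 1 - R 0) = 0 := by
      have hh : R 2 - R 0 = (Complex.I * r + 1) * (R 1 - R 0) := by
        rw [show R 2 - R 0 = (R 2 - R 1) + (R 1 - R 0) by ring, he2]; ring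
      rw [← hh, h20, sub_self]
    rcases mul_eq_zero.1 hfac with hc | hc
    · have := congrArg Complex.re hc
      simp at this
    · exact h10 (sub_eq_zero.1 hc)
  set g : S1 → ℝ := fun x => aspect (emb x) with hg
  have hgc : Continuous g := by
    apply Continuous.div
    · exact continuous_norm.comp (((continuous_apply (2 : Fin 4)).comp hembc).sub
        ((continuous_apply (1 : Fin 4)).comp hembc))
    · exact continuous_norm.comp (((continuous_apply (1 : Fin 4)).comp hembc).sub
        ((continuous_apply (0 : Fin 4)).comp hembc))
    · intro x
      exact norm_ne_zero_iff.2 (sub_ne_zero.2 (hne10 _ (hembmem x)))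
  have hgpos : ∀ x, 0 < g x := by
    intro x
    apply div_pos
    · exact norm_pos_iff.2 (hne21 _ (hembmem x))
    · exact norm_pos_iff.2 (sub_ne_zero.2 (hne10 _ (hembmem x)))
  have hrelmem : ∀ x : S1, relabel (emb x) ∈ ζ := by
    intro x
    rw [← hinv]
    exact mem_image_of_mem relabel (hembmem x)
  set τ : S1 → S1 := fun x => e.symm ⟨relabel (emb x), hrelmem x⟩ with hτ
  have hembτ : ∀ x, emb (τ x) = relabel (emb x) := by
    intro x
    simp only [hτ, hemb]
    rw [Homeomorph.apply_symm_apply]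
  have hrelc : Continuous (relabel : (Fin 4 → ℂ) → (Fin 4 → ℂ)) :=
    continuous_pi (fun k => continuous_apply (k + 1))
  have hτc : Continuous τ := by
    apply e.symm.continuous.comp
    exact Continuous.subtype_mk (hrelc.comp hembc) _
  have hrel4 : ∀ R : Fin 4 → ℂ, relabel (relabel (relabel (relabel R))) = R := by
    intro R
    funext k
    show R (k + 1 + 1 + 1 + 1) = R k
    congr 1
    fin_cases k <;> rfl
  have hτ4 : ∀ x, τ (τ (τ (τ x))) = x := by
    intro x
    apply hembinj
    rw [hembτ, hembτ, hembτ, hembτ, hrel4]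
  have hfree2 : ∀ x, τ (τ x) ≠ x := by
    intro x hx
    have h1 : emb (τ (τ x)) = emb x := by rw [hx]
    rw [hembτ, hembτ] at h1
    have h2 := congrFun h1 0
    exact hne20 _ (hembmem x) (by exact h2)
  have hflip : ∀ x, g (τ x) = (g x)⁻¹ := by
    intro x
    simp only [hg]
    rw [hembτ]
    obtain ⟨h10, r, hr, he2, he3⟩ := (hζsub (hembmem x)).1
    have e21 : relabel (emb x) 2 - relabel (emb x) 1 = emb x 0 - emb x 1 := by
      show emb x 3 - emb x 2 = emb x 0 - emb x 1
      rw [he3]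
      ring
    have e10 : relabel (emb x) 1 - relabel (emb x) 0 = emb x 2 - emb x 1 := rfl
    unfold aspect
    rw [e21, e10]
    rw [show emb x 0 - emb x 1 = -(emb x 1 - emb x 0) by ring, norm_neg]
    rw [inv_div]
  have hlocg : ∀ x : S1, g x = 1 → ∃ V : Set S1, IsOpen V ∧ x ∈ V ∧ Set.InjOn g V := by
    intro x hx
    obtain ⟨U, hUo, hUm, hUinj⟩ := hloc (emb x) (hembmem x) hx
    refine ⟨emb ⁻¹' U, hUo.preimage hembc, hUm, ?_⟩
    intro a ha b hb hab
    have h1 : emb a = emb b := hUinj ⟨ha, hembmem a⟩ ⟨hb, hembmem b⟩ hab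
    exact hembinj h1
  obtain ⟨hfin, k, hk, hcount⟩ := E4K.core hgc hgpos hτc hτ4 hfree2 hflip hlocg
  have hseteq : {R ∈ ζ | aspect R = 1} = emb '' {x : S1 | g x = 1} := by
    ext R
    constructor
    · rintro ⟨hRζ, hRa⟩
      refine ⟨e.symm ⟨R, hRζ⟩, ?_, ?_⟩
      · show g (e.symm ⟨R, hRζ⟩) = 1
        simp only [hg, hemb]
        rw [Homeomorph.apply_symm_apply]
        exact hRa
      · simp only [hemb]
        rw [Homeomorph.apply_symm_apply]
    · rintro ⟨x, hx, rfl⟩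
      exact ⟨hembmem x, hx⟩
  constructor
  · rw [hseteq]
    exact hfin.image emb
  · refine ⟨k, hk, ?_⟩
    rw [hseteq, Set.ncard_image_of_injective _ hembinj]
    exact hcount
end
end

section
/- Let γ be a polygon and let A be a connected component of I(γ) ⊂ ℝ⁸ that is a proper arc, i.e. the closure of A in ℝ⁸ is A ∪ {ζ₁, ζ₂} where ζ₁ ≠ ζ₂, this closure is homeomorphic to [0,1] with ζ₁ and ζ₂ corresponding to the endpoints, and each ζᵢ is, up to cyclic relabeling, a point of ℝ⁸ of the form (a,b,a,b,c,d,c,d) with (a,b) ≠ (c,d) (a degenerate rectangle collapsed onto a chord of γ). Then ψᵏ(A) ≠ A for k = 1, 2, 3; consequently the orbit of A under the ℤ/4 relabeling action consists of 4 distinct components. -/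
open Set Filter

noncomputable section

open Fin.NatCast


/-- The pattern satisfied by all cyclic relabelings of a degenerate chord. -/
def DegenP (ζ : Fin 4 → ℂ) : Prop :=
  (ζ 0 = ζ 1 ∧ ζ 2 = ζ 3 ∧ ζ 0 ≠ ζ 2) ∨ (ζ 1 = ζ 2 ∧ ζ 3 = ζ 0 ∧ ζ 1 ≠ ζ 3)

lemma degenChord_degenP {ζ : Fin 4 → ℂ} (h : DegenChord ζ) : DegenP ζ := by
  obtain ⟨z, w, hzw, h | h | h | h⟩ := h <;> subst h
  · exact Or.inl ⟨rfl, rfl, hzw⟩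
  · exact Or.inr ⟨rfl, rfl, hzw⟩
  · exact Or.inl ⟨rfl, rfl, Ne.symm hzw⟩
  · exact Or.inr ⟨rfl, rfl, Ne.symm hzw⟩

lemma relabel_apply (R : Fin 4 → ℂ) (k : Fin 4) : relabel R k = R (k + 1) := rfl

lemma relabel_iterate_apply (n : ℕ) (R : Fin 4 → ℂ) (k : Fin 4) :
    (relabel^[n]) R k = R (k + (n : Fin 4)) := by
  induction n generalizing R k with
  | zero => simp
  | succ m ih =>
      rw [Function.iterate_succ_apply, ih (relabel R) k, relabel_apply]
      congr 1
      push_cast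
      exact add_assoc _ _ _

lemma degenP_relabel {ζ : Fin 4 → ℂ} (h : DegenP ζ) : DegenP (relabel ζ) := by
  rcases h with ⟨h1, h2, h3⟩ | ⟨h1, h2, h3⟩
  · exact Or.inr ⟨by simpa [relabel_apply] using h2, by simpa [relabel_apply] using h1,
      by simpa [relabel_apply] using h3.symm⟩
  · exact Or.inl ⟨by simpa [relabel_apply] using h1, by simpa [relabel_apply] using h2,
      by simpa [relabel_apply] using h3⟩

lemma degenP_relabel_iterate (n : ℕ) {ζ : Fin 4 → ℂ} (h : DegenP ζ) :
    DegenP ((relabel^[n]) ζ) := by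
  induction n with
  | zero => simpa using h
  | succ m ih => rw [Function.iterate_succ_apply']; exact degenP_relabel ih

lemma degenP_not_rect {ζ : Fin 4 → ℂ} (h : DegenP ζ) : ¬ IsLabeledRect ζ := by
  rintro ⟨hne, r, hr, h2, _⟩
  rcases h with ⟨h1, _, _⟩ | ⟨h1, hz, h3⟩
  · exact hne h1.symm
  · have hz10 : ζ 1 - ζ 0 ≠ 0 := by
      intro hc
      apply h3
      rw [hz]
      exact (sub_eq_zero.mp hc)
    have : Complex.I * (r : ℂ) * (ζ 1 - ζ 0) = 0 := by rw [← h2, h1]; ring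
    rcases mul_eq_zero.mp this with hc | hc
    · rcases mul_eq_zero.mp hc with hc' | hc'
      · exact Complex.I_ne_zero hc'
      · exact hr.ne' (by exact_mod_cast hc')
    · exact hz10 hc

lemma degenP_not_fixed {ζ : Fin 4 → ℂ} (h : DegenP ζ) (n : ℕ)
    (hn : n = 1 ∨ n = 2 ∨ n = 3) : (relabel^[n]) ζ ≠ ζ := by
  intro hEq
  have key : ∀ k : Fin 4, ζ (k + (n : Fin 4)) = ζ k := by
    intro k
    conv_rhs => rw [← hEq]
    rw [relabel_iterate_apply]
  rcases hn with rfl | rfl | rfl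
  · -- n = 1 : ζ 0 = ζ 1 = ζ 2 = ζ 3
    have e0 : ζ 1 = ζ 0 := by simpa using key 0
    have e1 : ζ 2 = ζ 1 := by simpa using key 1
    have e2 : ζ 3 = ζ 2 := by simpa using key 2
    rcases h with ⟨_, _, h3⟩ | ⟨_, _, h3⟩
    · exact h3 (e1.trans e0).symm
    · exact h3 (e2.trans e1).symm
  · have e0 : ζ 2 = ζ 0 := by simpa using key 0
    have e1 : ζ 3 = ζ 1 := by simpa using key 1
    rcases h with ⟨_, _, h3⟩ | ⟨_, _, h3⟩
    · exact h3 e0.symm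
    · exact h3 e1.symm
  · have e0 : ζ 3 = ζ 0 := by simpa using key 0
    have e1 : ζ 0 = ζ 1 := by simpa using key 1
    have e2 : ζ 1 = ζ 2 := by simpa using key 2
    rcases h with ⟨ha, hb, h3⟩ | ⟨ha, hb, h3⟩
    · exact h3 (e1.trans e2)
    · exact h3 (hb.trans e1).symm

lemma rect_not_fixed {R : Fin 4 → ℂ} (h : IsLabeledRect R) (n : ℕ)
    (hn : n = 1 ∨ n = 2 ∨ n = 3) : (relabel^[n]) R ≠ R := by
  intro hEq
  have key : ∀ k : Fin 4, R (k + (n : Fin 4)) = R k := by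
    intro k
    conv_rhs => rw [← hEq]
    rw [relabel_iterate_apply]
  obtain ⟨hne, r, hr, h2, _⟩ := h
  rcases hn with rfl | rfl | rfl
  · exact hne (by simpa using key 0)
  · -- R 2 = R 0, but R 2 - R 0 = (I r + 1)(R 1 - R 0) ≠ 0
    have e0 : R 2 = R 0 := by simpa using key 0
    have hfac : (Complex.I * (r : ℂ) + 1) * (R 1 - R 0) = 0 := by
      have h20 : R 2 - R 0 = 0 := by rw [e0]; ring
      linear_combination h20 - h2
    rcases mul_eq_zero.mp hfac with hc | hc
    · have : (Complex.I * (r : ℂ) + 1).re = 0 := by rw [hc]; rfl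
      simp [Complex.add_re, Complex.mul_re] at this
    · exact hne (sub_eq_zero.mp hc)
  · exact hne (show R 0 = R 1 by simpa using key 1).symm

lemma relabel_continuous : Continuous relabel :=
  continuous_pi fun k => continuous_apply (k + 1)

lemma relabel_iterate_image_ne
    (S : Set (Fin 4 → ℂ)) (hS : ∀ R ∈ S, IsLabeledRect R)
    (A : Set (Fin 4 → ℂ)) (hA : A ⊆ S)
    (ζ₁ ζ₂ : Fin 4 → ℂ) (hzne : ζ₁ ≠ ζ₂)
    (hclos : closure A = A ∪ {ζ₁, ζ₂})
    (e : (Set.Icc (0:ℝ) 1) ≃ₜ (closure A))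
    (he0 : (e ⟨0, by norm_num⟩).val = ζ₁)
    (he1 : (e ⟨1, by norm_num⟩).val = ζ₂)
    (hd1 : DegenChord ζ₁) (hd2 : DegenChord ζ₂)
    (n : ℕ) (hn : n = 1 ∨ n = 2 ∨ n = 3) :
    (relabel^[n]) '' A ≠ A := by
  intro hEq
  have hP1 := degenChord_degenP hd1
  have hP2 := degenChord_degenP hd2
  have hfc : Continuous (relabel^[n]) := relabel_continuous.iterate n
  have hsub : (relabel^[n]) '' (closure A) ⊆ closure A := by
    refine (image_closure_subset_closure_image hfc).trans ?_
    rw [hEq]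
  have hz1c : ζ₁ ∈ closure A := by rw [hclos]; exact Or.inr (Or.inl rfl)
  have hz2c : ζ₂ ∈ closure A := by rw [hclos]; exact Or.inr (Or.inr rfl)
  have hnotA : ∀ ζ : Fin 4 → ℂ, DegenP ζ → ζ ∉ A := fun ζ hζ hmem =>
    degenP_not_rect hζ (hS ζ (hA hmem))
  have hmem2 : ∀ ζ : Fin 4 → ℂ, DegenP ζ → ζ ∈ closure A → ζ ∈ ({ζ₁, ζ₂} : Set _) := by
    intro ζ hζ hc
    rw [hclos] at hc
    rcases hc with hc | hc
    · exact absurd hc (hnotA ζ hζ)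
    · exact hc
  have hf1 : (relabel^[n]) ζ₁ = ζ₂ := by
    have hm : (relabel^[n]) ζ₁ ∈ ({ζ₁, ζ₂} : Set _) :=
      hmem2 _ (degenP_relabel_iterate n hP1) (hsub ⟨ζ₁, hz1c, rfl⟩)
    rcases hm with hm | hm
    · exact absurd hm (degenP_not_fixed hP1 n hn)
    · exact hm
  have hf2 : (relabel^[n]) ζ₂ = ζ₁ := by
    have hm : (relabel^[n]) ζ₂ ∈ ({ζ₁, ζ₂} : Set _) :=
      hmem2 _ (degenP_relabel_iterate n hP2) (hsub ⟨ζ₂, hz2c, rfl⟩)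
    rcases hm with hm | hm
    · exact hm
    · exact absurd hm (degenP_not_fixed hP2 n hn)
  -- Build the induced self-map of [0,1]
  have hmaps : Set.MapsTo (relabel^[n]) (closure A) (closure A) :=
    fun x hx => hsub ⟨x, hx, rfl⟩
  set F := Set.MapsTo.restrict _ _ _ hmaps with hF
  have hFc : Continuous F := Continuous.restrict hmaps hfc
  set G : (Set.Icc (0:ℝ) 1) → (Set.Icc (0:ℝ) 1) := fun x => e.symm (F (e x)) with hG
  have hGc : Continuous G := e.symm.continuous.comp (hFc.comp e.continuous)
  have hGEval : ∀ x : (Set.Icc (0:ℝ) 1), ((e (G x)) : Fin 4 → ℂ) = (relabel^[n]) ((e x) : Fin 4 → ℂ) := by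
    intro x
    simp only [hG, Homeomorph.apply_symm_apply]
    rfl
  set g : ℝ → ℝ := fun t => ((G (Set.projIcc 0 1 zero_le_one t)) : ℝ) with hg
  have hgc : Continuous g := continuous_subtype_val.comp (hGc.comp continuous_projIcc)
  have hG0 : G ⟨0, by norm_num⟩ = ⟨1, by norm_num⟩ := by
    apply e.injective
    apply Subtype.ext
    rw [hGEval, he0, hf1, he1]
  have hG1 : G ⟨1, by norm_num⟩ = ⟨0, by norm_num⟩ := by
    apply e.injective
    apply Subtype.ext
    rw [hGEval, he1, hf2, he0]
  have hg0 : g 0 = 1 := by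
    rw [hg]
    simp only [Set.projIcc_of_mem zero_le_one (by norm_num : (0:ℝ) ∈ Set.Icc (0:ℝ) 1)]
    rw [hG0]
  have hg1 : g 1 = 0 := by
    rw [hg]
    simp only [Set.projIcc_of_mem zero_le_one (by norm_num : (1:ℝ) ∈ Set.Icc (0:ℝ) 1)]
    rw [hG1]
  -- IVT for t ↦ g t - t
  have hivt : (0 : ℝ) ∈ (fun t => g t - t) '' Set.Icc (0:ℝ) 1 := by
    apply intermediate_value_Icc' zero_le_one ((hgc.sub continuous_id).continuousOn)
    constructor
    · simp [hg1]
    · simp [hg0]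
  obtain ⟨t, ht, hteq⟩ := hivt
  have hteq2 : g t - t = 0 := hteq
  have hgt : g t = t := by linarith
  have hGt : G ⟨t, ht⟩ = ⟨t, ht⟩ := by
    apply Subtype.ext
    have h4' := hgt
    simp only [hg] at h4'
    rw [Set.projIcc_of_mem zero_le_one ht] at h4'
    exact h4'
  set R : Fin 4 → ℂ := ((e ⟨t, ht⟩) : Fin 4 → ℂ) with hR
  have hRmem : R ∈ closure A := (e ⟨t, ht⟩).property
  have hfix : (relabel^[n]) R = R := by
    have := hGEval ⟨t, ht⟩
    rw [hGt] at this
    exact this.symm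
  rw [hclos] at hRmem
  rcases hRmem with hm | hm | hm
  · exact rect_not_fixed (hS R (hA hm)) n hn hfix
  · rw [hm] at hfix; rw [hfix] at hf1; exact hzne hf1
  · rw [hm] at hfix; rw [hfix] at hf2; exact hzne hf2.symm

lemma relabel_iterate_four : (relabel^[4]) = id := by
  funext R
  funext k
  rw [relabel_iterate_apply, show ((4 : ℕ) : Fin 4) = 0 from rfl, add_zero]
  rfl

lemma relabel_img_add (A : Set (Fin 4 → ℂ)) (m n : ℕ) :
    (relabel^[m]) '' ((relabel^[n]) '' A) = (relabel^[m + n]) '' A := by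
  rw [← Set.image_comp, ← Function.iterate_add]

theorem arc_order_four (φ : S1 → ℂ) (hφ : IsCCWJordan φ)
    (hpoly : IsPolygon (Set.range φ))
    (A : Set (Fin 4 → ℂ))
    (hcomp : ∃ R ∈ inscribed (Set.range φ),
      A = connectedComponentIn (inscribed (Set.range φ)) R)
    (ζ₁ ζ₂ : Fin 4 → ℂ) (hzne : ζ₁ ≠ ζ₂)
    (hclos : closure A = A ∪ {ζ₁, ζ₂})
    (e : (Set.Icc (0:ℝ) 1) ≃ₜ (closure A))
    (he0 : (e ⟨0, by norm_num⟩).val = ζ₁)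
    (he1 : (e ⟨1, by norm_num⟩).val = ζ₂)
    (hd1 : DegenChord ζ₁) (hd2 : DegenChord ζ₂) :
    relabel '' A ≠ A ∧ relabel '' (relabel '' A) ≠ A ∧
    relabel '' (relabel '' (relabel '' A)) ≠ A ∧
    Function.Injective (fun k : Fin 4 => (relabel^[(k : ℕ)]) '' A) := by
  obtain ⟨R0, hR0, hAeq⟩ := hcomp
  have hA : A ⊆ inscribed (Set.range φ) := by
    rw [hAeq]; exact connectedComponentIn_subset _ _
  have hS : ∀ R ∈ inscribed (Set.range φ), IsLabeledRect R := fun R hR => hR.1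
  have key : ∀ n : ℕ, n = 1 ∨ n = 2 ∨ n = 3 → (relabel^[n]) '' A ≠ A := fun n hn =>
    relabel_iterate_image_ne _ hS A hA ζ₁ ζ₂ hzne hclos e he0 he1 hd1 hd2 n hn
  have h1 : (relabel^[1]) '' A ≠ A := key 1 (Or.inl rfl)
  have h2 : (relabel^[2]) '' A ≠ A := key 2 (Or.inr (Or.inl rfl))
  have h3 : (relabel^[3]) '' A ≠ A := key 3 (Or.inr (Or.inr rfl))
  have h4 : (relabel^[4]) '' A = A := by rw [relabel_iterate_four, Set.image_id]
  have e1 : relabel '' A = (relabel^[1]) '' A := by rw [Function.iterate_one]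
  have e2 : relabel '' (relabel '' A) = (relabel^[2]) '' A := by
    rw [e1]
    have := relabel_img_add A 1 1
    rw [Function.iterate_one] at this
    exact this
  have e3 : relabel '' (relabel '' (relabel '' A)) = (relabel^[3]) '' A := by
    rw [e2]
    have := relabel_img_add A 1 2
    rw [Function.iterate_one] at this
    exact this
  refine ⟨by rw [e1]; exact h1, by rw [e2]; exact h2, by rw [e3]; exact h3, ?_⟩
  intro j k hjk
  simp only at hjk
  by_contra hne
  have cancel : ∀ a b : ℕ, a < b → b < 4 → (relabel^[a]) '' A = (relabel^[b]) '' A → False := by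
    intro a b hab hb4 heq
    have : (relabel^[4 - a]) '' ((relabel^[a]) '' A) = (relabel^[4 - a]) '' ((relabel^[b]) '' A) := by
      rw [heq]
    rw [relabel_img_add, relabel_img_add, Nat.sub_add_cancel (by omega), h4] at this
    -- 4 - a + b = 4 + (b - a)
    have h4ab : 4 - a + b = (b - a) + 4 := by omega
    rw [h4ab, ← relabel_img_add, h4] at this
    exact key (b - a) (by omega) this.symm
  rcases lt_trichotomy (j : ℕ) (k : ℕ) with hlt | heq | hgt
  · exact cancel _ _ hlt k.isLt hjk
  · exact hne (Fin.ext heq)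
  · exact cancel _ _ hgt j.isLt hjk.symm
end
end
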